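/- arXiv:2501.02358 — 5 statements merged into one kernel-verified Lean document; each statement's English description precedes it below -/
import Mathlib

section
/- Let q ∈ ℕ, 1 ≤ n ≤ q, and let φ_1,…,φ_n ∈ C[0,q]_Z be linearly independent. The following are equivalent: (a) {φ_k}_{k=1}^n is a T_Z-system; (b) for every f ∈ C[0,q]_Z, every best uniform approximant p* ∈ L_n of f admits an alternance set of length n+1; (c) the determinants Δ(φ_1,…,φ_n; ν_1,…,ν_n), taken over all integers 0 ≤ ν_1 < ⋯ < ν_n ≤ q, are all nonzero and all have the same sign. -/
/-!
Everything is read off the node determinants `Δ(ν) = det (φⱼ(νᵢ))`. Expanding `Δ` along row `k`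
shows that `t ↦ Δ(ν with νₖ replaced by t)` lies in `L_n` and vanishes at the other nodes.

(a) ⇒ (c): a vanishing `Δ(ν)` gives a polynomial vanishing at `n` nodes, and a sign change of `Δ`
when one node moves one step to the right gives the `n`-th zero (of the second type) of the
expanded determinant; all configurations are connected by such moves.
(c) ⇒ (a): at each of `n` zeros `νᵢ` of `p`, a nonnegative combination of the rows `φ(νᵢ - 1)` and
`φ(νᵢ)` annihilates the coefficients of `p`. Yet multilinearity writes the determinant of these
rows as a combination, with nonnegative weights, of the determinants of nondecreasing
configurations, which by (c) vanish or have the sign of `ε`, that of `ν` itself with a positive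
weight; so it cannot vanish.

(b) and (c) meet in annihilators `c` of `L_n` (`∑ c(x) p(x) = 0`). `0` is a best approximant of
`sign c`, so under (b) every nonzero annihilator alternates in sign on `n + 1` points; this rules
out annihilators on `n` nodes (a vanishing `Δ`) and, through the row expansion, on the `n + 1`
points of two adjacent configurations with `Δ` of opposite signs. Conversely, by Kolmogorov's
criterion, Hahn–Banach and Carathéodory, a best approximant yields an annihilator carried by at
most `n + 1` extremal points, with the sign of the error; under (c) it must live on exactly
`n + 1` points with alternating signs, which is the alternance.
-/

namespace DiscPaper

/-- `ν` is a zero (of the first or second type) of the discrete function `f` on `[0,q]_ℤ`. -/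
def IsZero (q : ℕ) (f : ℕ → ℝ) (ν : ℕ) : Prop :=
  (ν ≤ q ∧ f ν = 0) ∨ (1 ≤ ν ∧ ν ≤ q ∧ f (ν - 1) * f ν < 0)

/-- `N q f` is the number of zeros (of both types) of `f` on `[0,q]_ℤ`. -/
noncomputable def N (q : ℕ) (f : ℕ → ℝ) : ℕ := {ν : ℕ | IsZero q f ν}.ncard

/-- `N₀ q f` is the number of zeros of the first type of `f` on `[0,q]_ℤ`. -/
noncomputable def N0 (q : ℕ) (f : ℕ → ℝ) : ℕ := {ν : ℕ | ν ≤ q ∧ f ν = 0}.ncard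

/-- Number of sign changes of `g` on `[0,q]_ℤ`. -/
noncomputable def signChanges (q : ℕ) (g : ℕ → ℝ) : ℕ :=
  {ν : ℕ | 1 ≤ ν ∧ ν ≤ q ∧ g (ν - 1) * g ν < 0}.ncard

/-- `g` is obtained from `f` by replacing all its zero values on `[0,q]_ℤ` by
arbitrary nonzero values. -/
def Admissible (q : ℕ) (f g : ℕ → ℝ) : Prop :=
  (∀ ν ≤ q, g ν ≠ 0) ∧ ∀ ν ≤ q, f ν ≠ 0 → g ν = f ν

/-- `S⁻(f)`: least number of sign changes over all admissible replacements. -/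
noncomputable def Sminus (q : ℕ) (f : ℕ → ℝ) : ℕ :=
  sInf {s | ∃ g, Admissible q f g ∧ signChanges q g = s}

/-- `S⁺(f)`: largest number of sign changes over all admissible replacements. -/
noncomputable def Splus (q : ℕ) (f : ℕ → ℝ) : ℕ :=
  sSup {s | ∃ g, Admissible q f g ∧ signChanges q g = s}
/-- The polynomial `Σ aₖ φₖ` with respect to the system `φ`. -/
noncomputable def poly (n : ℕ) (φ : Fin n → ℕ → ℝ) (a : Fin n → ℝ) : ℕ → ℝ :=
  fun ν => ∑ k, a k * φ k ν

/-- Linear independence of the discrete functions `φ₁,…,φₙ` on `[0,q]_ℤ`. -/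
def LinIndepOn (q n : ℕ) (φ : Fin n → ℕ → ℝ) : Prop :=
  LinearIndependent ℝ (fun k : Fin n => fun ν : Fin (q + 1) => φ k ν)

/-- `{φₖ}` is a `T_ℤ`-system on `[0,q]_ℤ`: every nontrivial polynomial has at most
`n - 1` zeros (of both types). -/
def IsTZ (q n : ℕ) (φ : Fin n → ℕ → ℝ) : Prop :=
  ∀ a : Fin n → ℝ, a ≠ 0 → N q (poly n φ a) ≤ n - 1

/-- The uniform norm of a discrete function on `[0,q]_ℤ`. -/
noncomputable def normZ (q : ℕ) (f : ℕ → ℝ) : ℝ :=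
  (Finset.range (q + 1)).sup' (Finset.nonempty_range_iff.mpr q.succ_ne_zero)
    (fun ν => |f ν|)

/-- `poly n φ a` is a best uniform approximant of `f` from `L_n`. -/
noncomputable def IsBestApprox (q n : ℕ) (φ : Fin n → ℕ → ℝ) (f : ℕ → ℝ)
    (a : Fin n → ℝ) : Prop :=
  ∀ b : Fin n → ℝ,
    normZ q (fun ν => f ν - poly n φ a ν) ≤ normZ q (fun ν => f ν - poly n φ b ν)

/-- The best approximant `poly n φ a` of `f` admits a Chebyshev alternance set of
length `n+1`. -/
noncomputable def HasAlternance (q n : ℕ) (φ : Fin n → ℕ → ℝ) (f : ℕ → ℝ)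
    (a : Fin n → ℝ) : Prop :=
  ∃ ν : Fin (n + 1) → ℕ, StrictMono ν ∧ (∀ i, ν i ≤ q) ∧
    ∃ ε : ℝ, (ε = 1 ∨ ε = -1) ∧
      ∀ i : Fin (n + 1),
        ε * (-1) ^ (i : ℕ) * (poly n φ a (ν i) - f (ν i)) =
          normZ q (fun μ => poly n φ a μ - f μ)

/-- All the determinants `Δ(φ₁,…,φₙ; ν₁,…,νₙ)` over increasing choices
`0 ≤ ν₁ < ⋯ < νₙ ≤ q` are nonzero and have the same sign. -/
def DetsSameSign (q n : ℕ) (φ : Fin n → ℕ → ℝ) : Prop :=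
  ∃ ε : ℝ, (ε = 1 ∨ ε = -1) ∧
    ∀ ν : Fin n → ℕ, StrictMono ν → (∀ i, ν i ≤ q) →
      0 < ε * Matrix.det (Matrix.of fun i j : Fin n => φ j (ν i))

open Finset Function Filter Topology

lemma abs_le_normZ (q : ℕ) (f : ℕ → ℝ) {x : ℕ} (hx : x ≤ q) : |f x| ≤ normZ q f :=
  le_sup' (fun ν => |f ν|) (mem_range.mpr (Nat.lt_succ_of_le hx))

lemma normZ_le_iff {q : ℕ} {f : ℕ → ℝ} {C : ℝ} : normZ q f ≤ C ↔ ∀ x ≤ q, |f x| ≤ C := by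
  simp [normZ]

lemma normZ_lt_iff {q : ℕ} {f : ℕ → ℝ} {C : ℝ} : normZ q f < C ↔ ∀ x ≤ q, |f x| < C := by
  simp [normZ]

lemma normZ_sub_comm (q : ℕ) (f g : ℕ → ℝ) :
    normZ q (fun x => f x - g x) = normZ q (fun x => g x - f x) := by
  simp only [normZ, abs_sub_comm]

@[simp]
lemma poly_zero (n : ℕ) (φ : Fin n → ℕ → ℝ) : poly n φ 0 = 0 := by
  ext; simp [poly]

lemma poly_sub_smul (n : ℕ) (φ : Fin n → ℕ → ℝ) (a h : Fin n → ℝ) (δ : ℝ) (x : ℕ) :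
    poly n φ (a - δ • h) x = poly n φ a x - δ * poly n φ h x := by
  simp [poly, sub_mul, sum_sub_distrib, mul_sum, mul_assoc]

lemma IsZero.le {q : ℕ} {p : ℕ → ℝ} {x : ℕ} (h : IsZero q p x) : x ≤ q := by
  rcases h with ⟨h, -⟩ | ⟨-, h, -⟩ <;> exact h

lemma setOf_isZero_finite (q : ℕ) (p : ℕ → ℝ) : {x | IsZero q p x}.Finite :=
  (Set.finite_Iic q).subset fun _ => IsZero.le

lemma le_N_of_injective {q m : ℕ} {p : ℕ → ℝ} {μ : Fin m → ℕ} (hμ : Injective μ)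
    (hz : ∀ i, IsZero q p (μ i)) : m ≤ N q p := by
  have := Set.ncard_le_ncard (Set.range_subset_iff.2 hz) (setOf_isZero_finite q p)
  rwa [Set.ncard_range_of_injective hμ, Nat.card_eq_fintype_card, Fintype.card_fin] at this

lemma exists_strictMono_isZero {q m : ℕ} {p : ℕ → ℝ} (h : m ≤ N q p) :
    ∃ μ : Fin m → ℕ, StrictMono μ ∧ ∀ i, IsZero q p (μ i) := by
  have hfin := setOf_isZero_finite q p
  obtain ⟨t, hts, htc⟩ := exists_subset_card_eq (s := hfin.toFinset) (n := m)
    (by rwa [← Set.ncard_eq_toFinset_card _ hfin])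
  exact ⟨t.orderEmbOfFin htc, (t.orderEmbOfFin htc).strictMono,
    fun i => hfin.mem_toFinset.1 (hts (t.orderEmbOfFin_mem htc i))⟩

/-- `Δ(φ₁,…,φₙ; ν₁,…,νₙ)`. -/
noncomputable def nodeDet {n : ℕ} (φ : Fin n → ℕ → ℝ) (ν : Fin n → ℕ) : ℝ :=
  (Matrix.of fun i j : Fin n => φ j (ν i)).det

section nodeDet

variable {n : ℕ} (φ : Fin n → ℕ → ℝ) {ν : Fin n → ℕ}

lemma nodeDet_eq_zero_of_eq {i j : Fin n} (hij : i ≠ j) (h : ν i = ν j) : nodeDet φ ν = 0 :=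
  Matrix.det_zero_of_row_eq hij (funext fun k => by simp [h])

lemma exists_poly_eq_zero_of_nodeDet_eq_zero (h : nodeDet φ ν = 0) :
    ∃ a ≠ 0, ∀ i, poly n φ a (ν i) = 0 := by
  obtain ⟨a, ha, hMa⟩ := Matrix.exists_mulVec_eq_zero_iff.mpr h
  exact ⟨a, ha, fun i => by simpa [Matrix.mulVec, dotProduct, poly, mul_comm] using congrFun hMa i⟩

lemma nodeDet_eq_zero_iff :
    nodeDet φ ν = 0 ↔ ∃ g : Fin n → ℝ, g ≠ 0 ∧ ∀ j, ∑ i, g i * φ j (ν i) = 0 := by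
  simp [nodeDet, ← Matrix.exists_vecMul_eq_zero_iff, funext_iff, Matrix.vecMul, dotProduct]

lemma exists_poly_eq_nodeDet_update (ν : Fin n → ℕ) (k : Fin n) :
    ∃ a, ∀ t, nodeDet φ (update ν k t) = poly n φ a t := by
  set M := Matrix.of fun i j : Fin n => φ j (ν i)
  refine ⟨fun j => M.adjugate j k, fun t => ?_⟩
  have hM : (Matrix.of fun i j : Fin n => φ j (update ν k t i)) = M.updateRow k (φ · t) := by
    ext i j
    rcases eq_or_ne i k with rfl | hik <;> simp [M, Matrix.updateRow_apply, *]
  rw [nodeDet, hM, Matrix.det_eq_sum_mul_adjugate_row _ k]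
  simp [poly, Matrix.adjugate_apply, mul_comm]

end nodeDet

lemma val_le_of_strictMono {m : ℕ} {ν : Fin m → ℕ} (h : StrictMono ν) (i : Fin m) :
    (i : ℕ) ≤ ν i := by
  obtain ⟨k, hk⟩ := i
  induction k with
  | zero => exact Nat.zero_le _
  | succ k ih => exact (ih (by omega)).trans_lt (h (Fin.mk_lt_mk.2 k.lt_succ_self))

lemma exists_update_succ_eq {n : ℕ} {ν : Fin n → ℕ} (hν : StrictMono ν)
    (hne : ν ≠ Fin.val) :
    ∃ μ k, StrictMono μ ∧ (∀ i, μ i ≤ ν i) ∧ update μ k (μ k + 1) = ν ∧ ∑ i, μ i < ∑ i, ν i := by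
  classical
  have hS : (univ.filter fun k : Fin n => (k : ℕ) < ν k).Nonempty := by
    by_contra h
    refine hne (funext fun i => le_antisymm ?_ (val_le_of_strictMono hν i))
    simpa using fun hi => h ⟨i, mem_filter.2 ⟨mem_univ i, hi⟩⟩
  set k := (univ.filter fun k : Fin n => (k : ℕ) < ν k).min' hS
  have hk : (k : ℕ) < ν k := (mem_filter.1 (min'_mem _ hS)).2
  have hbelow : ∀ j < k, ν j = j := fun j hj =>
    le_antisymm (not_lt.1 fun h => hj.not_ge (min'_le _ _ (mem_filter.2 ⟨mem_univ j, h⟩)))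
      (val_le_of_strictMono hν j)
  refine ⟨update ν k (ν k - 1), k, fun i j hij => ?_, fun i => ?_, ?_, ?_⟩
  · rcases eq_or_ne i k with rfl | hik
    · simpa [hij.ne'] using (Nat.sub_le _ 1).trans_lt (hν hij)
    rcases eq_or_ne j k with rfl | hjk
    · simp only [update_self, update_of_ne hik, hbelow i hij]
      have := Fin.lt_def.1 hij
      omega
    · simpa [hik, hjk] using hν hij
  · rcases eq_or_ne i k with rfl | hik <;> simp [*]
  · rw [update_self, update_idem, Nat.sub_add_cancel (by omega), update_eq_self]
  · refine sum_lt_sum (fun i _ => ?_) ⟨k, mem_univ k, by simp; omega⟩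
    rcases eq_or_ne i k with rfl | hik <;> simp [*]

lemma exists_sign_of_adjacent {q n : ℕ} (hnq : n ≤ q + 1) {D : (Fin n → ℕ) → ℝ}
    (hD : ∀ ν, StrictMono ν → (∀ i, ν i ≤ q) → D ν ≠ 0)
    (hadj : ∀ ν k, StrictMono ν → (∀ i, ν i ≤ q) → StrictMono (update ν k (ν k + 1)) →
      (∀ i, update ν k (ν k + 1) i ≤ q) → 0 < D ν * D (update ν k (ν k + 1))) :
    ∃ ε : ℝ, (ε = 1 ∨ ε = -1) ∧ ∀ ν, StrictMono ν → (∀ i, ν i ≤ q) → 0 < ε * D ν := by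
  have hq₀ : ∀ i : Fin n, (i : ℕ) ≤ q := fun i => by have := i.isLt; omega
  have key : ∀ ν, StrictMono ν → (∀ i, ν i ≤ q) → 0 < D Fin.val * D ν := by
    intro ν
    induction h : ∑ i, ν i using Nat.strong_induction_on generalizing ν with
    | _ m ih =>
      intro hν hq
      by_cases h₀ : ν = Fin.val
      · subst h₀; exact mul_self_pos.2 (hD Fin.val Fin.val_strictMono hq₀)
      obtain ⟨μ, k, hμ, hμν, rfl, hsum⟩ := exists_update_succ_eq hν h₀
      have hμq : ∀ i, μ i ≤ q := fun i => (hμν i).trans (hq i)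
      have h₁ := ih _ (h ▸ hsum) μ rfl hμ hμq
      have h₂ := hadj μ k hμ hμq hν hq
      have hμ0 := mul_self_pos.2 (hD μ hμ hμq)
      nlinarith
  have hD₀ := hD Fin.val Fin.val_strictMono hq₀
  refine ⟨if 0 < D Fin.val then 1 else -1, by split_ifs <;> simp, fun ν hν hq => ?_⟩
  have := key ν hν hq
  split_ifs with h
  · nlinarith
  · have : D Fin.val < 0 := lt_of_le_of_ne (not_lt.1 h) hD₀
    nlinarith

section TZ

variable {q n : ℕ} {φ : Fin n → ℕ → ℝ}

lemma IsTZ.N_lt (hA : IsTZ q n φ) {a : Fin n → ℝ} (ha : a ≠ 0) : N q (poly n φ a) < n := by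
  have hn : n ≠ 0 := by rintro rfl; exact ha (Subsingleton.elim _ _)
  have := hA a ha
  omega

lemma IsTZ.nodeDet_ne_zero (hA : IsTZ q n φ) {ν : Fin n → ℕ} (hν : StrictMono ν)
    (hq : ∀ i, ν i ≤ q) : nodeDet φ ν ≠ 0 := by
  intro h
  obtain ⟨a, ha, hz⟩ := exists_poly_eq_zero_of_nodeDet_eq_zero φ h
  exact (hA.N_lt ha).not_ge (le_N_of_injective hν.injective fun i => Or.inl ⟨hq i, hz i⟩)

lemma IsTZ.nodeDet_mul_update_pos (hA : IsTZ q n φ) {ν : Fin n → ℕ} {k : Fin n}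
    (hν : StrictMono ν) (hq : ∀ i, ν i ≤ q) (hν' : StrictMono (update ν k (ν k + 1)))
    (hq' : ∀ i, update ν k (ν k + 1) i ≤ q) :
    0 < nodeDet φ ν * nodeDet φ (update ν k (ν k + 1)) := by
  obtain ⟨a, ha⟩ := exists_poly_eq_nodeDet_update φ ν k
  have hak : poly n φ a (ν k) = nodeDet φ ν := by rw [← ha, update_eq_self]
  have ha0 : a ≠ 0 := by rintro rfl; exact hA.nodeDet_ne_zero hν hq (by simpa using hak.symm)
  by_contra hneg
  -- the nodes of `update ν k (ν k + 1)` are `n` zeros of `poly n φ a`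
  refine (hA.N_lt ha0).not_ge (le_N_of_injective hν'.injective fun i => ?_)
  rcases eq_or_ne i k with rfl | hik
  · refine Or.inr ⟨by simp, by simpa using hq' i, ?_⟩
    rw [update_self, Nat.add_sub_cancel, hak, ← ha]
    exact lt_of_le_of_ne (not_lt.1 hneg)
      (mul_ne_zero (hA.nodeDet_ne_zero hν hq) (hA.nodeDet_ne_zero hν' hq'))
  · refine Or.inl ⟨by simpa [update_of_ne hik] using hq i, ?_⟩
    rw [update_of_ne hik, ← ha]
    exact nodeDet_eq_zero_of_eq φ hik.symm (by simp [update_of_ne hik])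

theorem IsTZ.detsSameSign (hnq : n ≤ q + 1) (hA : IsTZ q n φ) : DetsSameSign q n φ :=
  exists_sign_of_adjacent hnq (fun _ hν hq => hA.nodeDet_ne_zero hν hq)
    (fun _ _ hν hq hν' hq' => hA.nodeDet_mul_update_pos hν hq hν' hq')

end TZ

lemma det_of_add_eq_sum_nodeDet {n : ℕ} (φ : Fin n → ℕ → ℝ) (α β : Fin n → ℝ) (μ ν : Fin n → ℕ) :
    (Matrix.of fun i j => α i * φ j (μ i) + β i * φ j (ν i)).det =
      ∑ s : Finset (Fin n), (∏ i, if i ∈ s then α i else β i) * nodeDet φ (s.piecewise μ ν) := by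
  classical
  have hsplit : (Matrix.of fun i j => α i * φ j (μ i) + β i * φ j (ν i)) =
      (fun i => α i • fun j => φ j (μ i)) + fun i => β i • fun j => φ j (ν i) := by
    ext i j; simp
  rw [hsplit]
  change Matrix.detRowAlternating _ = _
  rw [AlternatingMap.map_add_univ]
  refine sum_congr rfl fun s _ => ?_
  have hpiece :
      s.piecewise (fun i => α i • fun j => φ j (μ i)) (fun i => β i • fun j => φ j (ν i)) =
      fun i => (if i ∈ s then α i else β i) • fun j => φ j (s.piecewise μ ν i) := by
    ext i j; by_cases hi : i ∈ s <;> simp [hi]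
  rw [hpiece, AlternatingMap.map_smul_univ, smul_eq_mul]
  rfl

lemma exists_blend_of_isZero {q : ℕ} {p : ℕ → ℝ} {x : ℕ} (hx : IsZero q p x) :
    ∃ α β : ℝ, 0 ≤ α ∧ 0 < β ∧ α * p (x - 1) + β * p x = 0 := by
  rcases hx with ⟨-, h0⟩ | ⟨-, -, hneg⟩
  · exact ⟨0, 1, le_rfl, one_pos, by simp [h0]⟩
  · refine ⟨|p x|, |p (x - 1)|, abs_nonneg _, abs_pos.2 (left_ne_zero_of_mul hneg.ne), ?_⟩
    rcases abs_cases (p x) with ⟨h₁, h₁'⟩ | ⟨h₁, h₁'⟩ <;>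
      rcases abs_cases (p (x - 1)) with ⟨h₂, h₂'⟩ | ⟨h₂, h₂'⟩ <;> rw [h₁, h₂] <;> nlinarith

lemma monotone_piecewise_sub_one {n : ℕ} {μ : Fin n → ℕ} (hμ : StrictMono μ)
    (s : Finset (Fin n)) : Monotone (s.piecewise (fun i => μ i - 1) μ) := by
  intro i j hij
  rcases hij.lt_or_eq with hij | rfl
  · have := hμ hij
    by_cases hi : i ∈ s <;> by_cases hj : j ∈ s <;> simp [hi, hj] <;> omega
  · rfl

section DetsSameSign

variable {q n : ℕ} {φ : Fin n → ℕ → ℝ} {ε : ℝ}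

lemma nonneg_nodeDet_of_monotone
    (hε : ∀ ν : Fin n → ℕ, StrictMono ν → (∀ i, ν i ≤ q) → 0 < ε * nodeDet φ ν)
    {w : Fin n → ℕ} (hw : Monotone w) (hq : ∀ i, w i ≤ q) : 0 ≤ ε * nodeDet φ w := by
  by_cases hinj : Injective w
  · exact (hε w (hw.strictMono_of_injective hinj) hq).le
  · obtain ⟨i, j, hij, hne⟩ : ∃ i j, w i = w j ∧ i ≠ j := by
      simpa [Injective] using hinj
    rw [nodeDet_eq_zero_of_eq φ hne hij, mul_zero]

theorem DetsSameSign.isTZ (hC : DetsSameSign q n φ) : IsTZ q n φ := by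
  obtain ⟨ε, -, hε⟩ := hC
  intro a ha
  by_contra hN
  obtain ⟨μ, hμ, hz⟩ := exists_strictMono_isZero (q := q) (m := n) (p := poly n φ a) (by omega)
  choose α β hα hβ hαβ using fun i => exists_blend_of_isZero (hz i)
  -- the blended rows `α i φ(μ i - 1) + β i φ(μ i)` all annihilate `a`
  have hdet : (Matrix.of fun i j => α i * φ j (μ i - 1) + β i * φ j (μ i)).det = 0 := by
    refine Matrix.exists_mulVec_eq_zero_iff.1 ⟨a, ha, funext fun i => ?_⟩
    rw [Pi.zero_apply, ← hαβ i]
    simp only [Matrix.mulVec, dotProduct, Matrix.of_apply, poly, mul_sum, ← sum_add_distrib]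
    exact sum_congr rfl fun j _ => by ring
  rw [det_of_add_eq_sum_nodeDet] at hdet
  have hpos : 0 < ∑ s : Finset (Fin n), (∏ i, if i ∈ s then α i else β i) *
      (ε * nodeDet φ (s.piecewise (fun i => μ i - 1) μ)) := by
    refine sum_pos' (fun s _ => mul_nonneg (prod_nonneg fun i _ => ?_)
      (nonneg_nodeDet_of_monotone hε (monotone_piecewise_sub_one hμ s) fun i => ?_))
      ⟨∅, mem_univ _, ?_⟩
    · split_ifs
      exacts [hα i, (hβ i).le]
    · have := (hz i).le
      by_cases hi : i ∈ s <;> simp [hi] <;> omega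
    · simp only [notMem_empty, if_false, piecewise_empty]
      exact mul_pos (prod_pos fun i _ => hβ i) (hε μ hμ fun i => (hz i).le)
  refine hpos.ne' ?_
  rw [← mul_zero ε, ← hdet, mul_sum]
  exact sum_congr rfl fun _ _ => by ring

end DetsSameSign

lemma sum_range_eq_sum_comp {q : ℕ} {ι : Type*} [Fintype ι] {e : ι → ℕ} (he : Injective e)
    (heq : ∀ i, e i ≤ q) {F : ℕ → ℝ} (hF : ∀ x ≤ q, F x ≠ 0 → x ∈ Set.range e) :
    ∑ x ∈ range (q + 1), F x = ∑ i, F (e i) :=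
  (sum_of_injOn e he.injOn (fun i _ => mem_range.2 (Nat.lt_succ_of_le (heq i)))
    (fun x hx hxe => by_contra fun h =>
      hxe (by simpa using hF x (by simpa [Nat.lt_succ_iff] using hx) h))
    fun _ _ => rfl).symm

lemma mem_range_of_extend_ne_zero {ι : Type*} {e : ι → ℕ} {g : ι → ℝ} {x : ℕ}
    (h : extend e g 0 x ≠ 0) : x ∈ Set.range e :=
  by_contra fun hx => h (by rw [extend_apply' _ _ _ hx]; rfl)

lemma mul_mul_nonpos_of_add_eq_zero {u v A B : ℝ} (h : u * A + v * B = 0) :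
    u * v * (A * B) ≤ 0 := by
  have : u * v * (A * B) = -(v * B) ^ 2 := by linear_combination (v * B) * h
  exact this ▸ neg_nonpos.2 (sq_nonneg _)

def Annihilates (q n : ℕ) (φ : Fin n → ℕ → ℝ) (c : ℕ → ℝ) : Prop :=
  ∀ j, ∑ x ∈ range (q + 1), c x * φ j x = 0

def HasSignAlternance (q m : ℕ) (c : ℕ → ℝ) : Prop :=
  ∃ ν : Fin m → ℕ, StrictMono ν ∧ (∀ i, ν i ≤ q) ∧
    ∃ ε : ℝ, (ε = 1 ∨ ε = -1) ∧ ∀ i : Fin m, 0 < ε * (-1) ^ (i : ℕ) * c (ν i)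

lemma exists_sign_alternating_of_mul_neg {m : ℕ} {u : Fin (m + 1) → ℝ} (h0 : u 0 ≠ 0)
    (hu : ∀ i : Fin m, u i.castSucc * u i.succ < 0) :
    ∃ ε : ℝ, (ε = 1 ∨ ε = -1) ∧ ∀ i : Fin (m + 1), 0 < ε * (-1) ^ (i : ℕ) * u i := by
  refine ⟨if 0 < u 0 then 1 else -1, by split_ifs <;> simp, fun i => ?_⟩
  induction i using Fin.induction with
  | zero =>
    split_ifs with h
    · simpa using h
    · simpa using lt_of_le_of_ne (not_lt.1 h) h0
  | succ i ih =>
    have := hu i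
    rw [Fin.val_succ, pow_succ]
    rw [Fin.val_castSucc] at ih
    nlinarith [sq_nonneg (u i.castSucc)]

lemma val_eq_succ_of_apply_eq_succ {m : ℕ} {ν : Fin m → ℕ} (hν : StrictMono ν) {i j : Fin m}
    (h : ν j = ν i + 1) : (j : ℕ) = i + 1 := by
  have hij : i < j := hν.lt_iff_lt.1 (by omega)
  by_contra hne
  have hl : (i : ℕ) + 1 < m := by omega
  have h₁ := hν (show i < ⟨i + 1, hl⟩ from Fin.mk_lt_mk.2 (by simp))
  have h₂ := hν (show (⟨i + 1, hl⟩ : Fin m) < j from Fin.lt_def.2 (by simp; omega))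
  omega

lemma HasSignAlternance.mul_succ_neg {q m : ℕ} {c : ℕ → ℝ} (h : HasSignAlternance q m c)
    {y : Fin m → ℕ} (hy : Injective y) (hsupp : ∀ x, c x ≠ 0 → x ∈ Set.range y) {x : ℕ}
    (hx : x ∈ Set.range y) (hx' : x + 1 ∈ Set.range y) : c x * c (x + 1) < 0 := by
  obtain ⟨ν, hν, -, ε, hε, halt⟩ := h
  have himage : univ.image ν = univ.image y := by
    refine eq_of_subset_of_card_le (fun x hx => ?_) ?_
    · obtain ⟨j, -, rfl⟩ := mem_image.1 hx
      obtain ⟨i, hi⟩ := hsupp _ (right_ne_zero_of_mul (halt j).ne')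
      exact mem_image.2 ⟨i, mem_univ _, hi⟩
    · rw [card_image_of_injective _ hy, card_image_of_injective _ hν.injective]
  have hν_of_y : ∀ z ∈ Set.range y, ∃ i, ν i = z := fun z ⟨i, hi⟩ => by
    obtain ⟨j, -, hj⟩ := mem_image.1 (himage ▸ mem_image_of_mem y (mem_univ i))
    exact ⟨j, hj.trans hi⟩
  obtain ⟨i, rfl⟩ := hν_of_y x hx
  obtain ⟨j, hj⟩ := hν_of_y _ hx'
  have hi := halt i
  have hj' := halt j
  rw [val_eq_succ_of_apply_eq_succ hν hj, pow_succ] at hj'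
  rw [← hj]
  have hsq : (ε * (-1) ^ (i : ℕ)) ^ 2 = 1 := by
    rw [mul_pow, ← pow_mul, mul_comm (i : ℕ), pow_mul]
    rcases hε with rfl | rfl <;> norm_num
  nlinarith

section Annihilates

variable {q n : ℕ} {φ : Fin n → ℕ → ℝ} {c : ℕ → ℝ}

lemma Annihilates.sum_mul_poly (hc : Annihilates q n φ c) (b : Fin n → ℝ) :
    ∑ x ∈ range (q + 1), c x * poly n φ b x = 0 := by
  simp only [poly, mul_sum]
  rw [sum_comm]
  refine sum_eq_zero fun j _ => ?_
  simp_rw [mul_left_comm _ (b j)]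
  rw [← mul_sum, hc j, mul_zero]

lemma annihilates_extend {ι : Type*} [Fintype ι] {e : ι → ℕ} (he : Injective e)
    (heq : ∀ i, e i ≤ q) {g : ι → ℝ} (hg : ∀ j, ∑ i, g i * φ j (e i) = 0) :
    Annihilates q n φ (extend e g 0) := fun j => by
  rw [sum_range_eq_sum_comp he heq fun _ _ hx =>
    mem_range_of_extend_ne_zero (left_ne_zero_of_mul hx)]
  simpa [he.extend_apply] using hg j

lemma exists_annihilates_of_injective {e : Fin (n + 1) → ℕ} (he : Injective e)
    (heq : ∀ i, e i ≤ q) :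
    ∃ c, Annihilates q n φ c ∧ (∃ x ≤ q, c x ≠ 0) ∧ ∀ x, c x ≠ 0 → x ∈ Set.range e := by
  obtain ⟨g, hg, i, hi⟩ :=
    (Fintype.not_linearIndependent_iff (R := ℝ) (v := fun i j => φ j (e i))).1 fun hli => by
      simpa using hli.fintype_card_le_finrank
  refine ⟨extend e g 0, annihilates_extend he heq fun j => by simpa using congrFun hg j,
    ⟨e i, heq i, by rwa [he.extend_apply]⟩, fun _ => mem_range_of_extend_ne_zero⟩

/-- `Δ(update μ k ·)` is a polynomial, so `c` annihilates it; it vanishes at the nodes `μ i`,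
`i ≠ k`. -/
lemma Annihilates.exchange (hc : Annihilates q n φ c) {μ : Fin n → ℕ} {t : ℕ} (hμ : Injective μ)
    (ht : t ∉ Set.range μ) (hμq : ∀ i, μ i ≤ q) (htq : t ≤ q)
    (hsupp : ∀ x ≤ q, c x ≠ 0 → x ∈ insert t (Set.range μ)) (k : Fin n) :
    c (μ k) * nodeDet φ μ + c t * nodeDet φ (update μ k t) = 0 := by
  obtain ⟨a, ha⟩ := exists_poly_eq_nodeDet_update φ μ k
  have := hc.sum_mul_poly a
  rw [sum_range_eq_sum_comp (Fin.cons_injective_iff.2 ⟨ht, hμ⟩) (Fin.cases htq hμq)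
    fun x hx hcx => by simpa [Fin.range_cons] using hsupp x hx (left_ne_zero_of_mul hcx),
    Fin.sum_univ_succ, sum_eq_single k] at this
  · simpa [← ha, add_comm] using this
  · intro i _ hik
    rw [Fin.cons_succ, ← ha, nodeDet_eq_zero_of_eq φ hik.symm (by simp [update_of_ne hik]),
      mul_zero]
  · simp

end Annihilates

lemma pos_mul_of_pos_mul_sign {s x : ℝ} (h : 0 < s * SignType.sign x) : 0 < s * x := by
  rcases lt_trichotomy x 0 with hx | rfl | hx
  · simp only [sign_neg hx, SignType.coe_neg_one] at h
    nlinarith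
  · simp at h
  · simp only [sign_pos hx, SignType.coe_one] at h
    nlinarith

section BestApprox

variable {q n : ℕ} {φ : Fin n → ℕ → ℝ} {c : ℕ → ℝ}

lemma Annihilates.one_le_normZ_sign_sub_poly (hc : Annihilates q n φ c)
    (hne : ∃ x ≤ q, c x ≠ 0) (b : Fin n → ℝ) :
    1 ≤ normZ q (fun x => (SignType.sign (c x) : ℝ) - poly n φ b x) := by
  set g : ℕ → ℝ := fun x => (SignType.sign (c x) : ℝ) - poly n φ b x
  set W := ∑ x ∈ range (q + 1), |c x|
  obtain ⟨x₀, hx₀, hcx₀⟩ := hne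
  have hW : 0 < W := sum_pos' (fun _ _ => abs_nonneg _)
    ⟨x₀, mem_range.2 (Nat.lt_succ_of_le hx₀), abs_pos.2 hcx₀⟩
  have hcg : ∑ x ∈ range (q + 1), c x * g x = W := by
    simp [g, W, mul_sub, sum_sub_distrib, hc.sum_mul_poly, self_mul_sign]
  have : W * 1 ≤ W * normZ q g := calc
    W * 1 = ∑ x ∈ range (q + 1), c x * g x := by rw [mul_one, hcg]
    _ ≤ ∑ x ∈ range (q + 1), |c x| * normZ q g := sum_le_sum fun x hx =>
      (le_abs_self _).trans (by
        rw [abs_mul]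
        exact mul_le_mul_of_nonneg_left
          (abs_le_normZ q g (Nat.lt_succ_iff.1 (mem_range.1 hx))) (abs_nonneg _))
    _ = W * normZ q g := by rw [sum_mul]
  exact le_of_mul_le_mul_left this hW

lemma Annihilates.hasSignAlternance
    (hB : ∀ f a, IsBestApprox q n φ f a → HasAlternance q n φ f a)
    (hc : Annihilates q n φ c) (hne : ∃ x ≤ q, c x ≠ 0) : HasSignAlternance q (n + 1) c := by
  set f : ℕ → ℝ := fun x => SignType.sign (c x)
  have hbest : IsBestApprox q n φ f 0 := fun b => by
    refine le_trans ?_ (hc.one_le_normZ_sign_sub_poly hne b)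
    refine normZ_le_iff.2 fun x _ => ?_
    rcases lt_trichotomy (c x) 0 with h | h | h <;> simp [f, h]
  obtain ⟨ν, hν, hq, ε, hε, halt⟩ := hB f 0 hbest
  obtain ⟨x₀, hx₀, hcx₀⟩ := hne
  have hE : 0 < normZ q (fun x => poly n φ 0 x - f x) := lt_of_lt_of_le
    (by rcases lt_trichotomy (c x₀) 0 with h | h | h <;> simp_all [f]) (abs_le_normZ _ _ hx₀)
  refine ⟨ν, hν, hq, -ε, by rcases hε with rfl | rfl <;> simp, fun i => ?_⟩
  rw [← halt i] at hE
  exact pos_mul_of_pos_mul_sign (by simpa [f] using hE)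

lemma nodeDet_ne_zero_of_forall_hasAlternance
    (hB : ∀ f a, IsBestApprox q n φ f a → HasAlternance q n φ f a) {ν : Fin n → ℕ}
    (hν : StrictMono ν) (hq : ∀ i, ν i ≤ q) : nodeDet φ ν ≠ 0 := by
  intro h
  obtain ⟨g, hg, hdep⟩ := (nodeDet_eq_zero_iff φ).1 h
  obtain ⟨i, hi⟩ := Function.ne_iff.1 hg
  obtain ⟨ν', hν', -, ε, -, halt⟩ := (annihilates_extend hν.injective hq hdep).hasSignAlternance hB
    ⟨ν i, hq i, by rwa [hν.injective.extend_apply]⟩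
  -- `ν'` would inject `n + 1` points into the `n` nodes of `ν`
  have h₁ := card_le_card_of_injOn ν' (s := univ) (t := univ.image ν)
    (fun j _ => by simpa using mem_range_of_extend_ne_zero (right_ne_zero_of_mul (halt j).ne'))
    hν'.injective.injOn
  have h₂ := card_image_le (s := univ) (f := ν)
  simp only [card_univ, Fintype.card_fin] at h₁ h₂
  omega

lemma nodeDet_mul_update_pos_of_forall_hasAlternance
    (hB : ∀ f a, IsBestApprox q n φ f a → HasAlternance q n φ f a) {ν : Fin n → ℕ} {k : Fin n}
    (hν : StrictMono ν) (hq : ∀ i, ν i ≤ q) (hν' : StrictMono (update ν k (ν k + 1)))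
    (hq' : ∀ i, update ν k (ν k + 1) i ≤ q) :
    0 < nodeDet φ ν * nodeDet φ (update ν k (ν k + 1)) := by
  have hne := mul_ne_zero (nodeDet_ne_zero_of_forall_hasAlternance hB hν hq)
    (nodeDet_ne_zero_of_forall_hasAlternance hB hν' hq')
  have ht : ν k + 1 ∉ Set.range ν := by
    rintro ⟨i, hi⟩
    rcases eq_or_ne i k with rfl | hik
    · omega
    · exact hik (hν'.injective (by simp [update_of_ne hik, hi]))
  have htq : ν k + 1 ≤ q := by simpa only [update_self] using hq' k
  set y : Fin (n + 1) → ℕ := Fin.cons (ν k + 1) ν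
  have hy : Injective y := Fin.cons_injective_iff.2 ⟨ht, hν.injective⟩
  obtain ⟨c, hc, hc0, hcy⟩ := exists_annihilates_of_injective (φ := φ) hy
    (Fin.cases (motive := fun i => y i ≤ q) htq hq)
  have hexch := hc.exchange hν.injective ht hq htq
    (fun x _ hx => by simpa [y, Fin.range_cons] using hcy x hx) k
  have hcc := (hc.hasSignAlternance hB hc0).mul_succ_neg hy hcy (x := ν k)
    ⟨k.succ, by simp [y]⟩ ⟨0, by simp [y]⟩
  by_contra hneg
  exact (mul_pos_of_neg_of_neg hcc (lt_of_le_of_ne (not_lt.1 hneg) hne)).not_ge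
    (mul_mul_nonpos_of_add_eq_zero hexch)

theorem detsSameSign_of_forall_hasAlternance (hnq : n ≤ q + 1)
    (hB : ∀ f a, IsBestApprox q n φ f a → HasAlternance q n φ f a) : DetsSameSign q n φ :=
  exists_sign_of_adjacent hnq (fun _ hν hq => nodeDet_ne_zero_of_forall_hasAlternance hB hν hq)
    (fun _ _ hν hq hν' hq' => nodeDet_mul_update_pos_of_forall_hasAlternance hB hν hq hν' hq')

end BestApprox

lemma update_comp_succAbove_succ {α : Type*} {m : ℕ} (y : Fin (m + 1) → α) (i : Fin m) :
    update (y ∘ i.succ.succAbove) i (y i.succ) = y ∘ i.castSucc.succAbove := by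
  ext r
  rcases eq_or_ne r i with rfl | hr
  · simp [Fin.succAbove_castSucc_self]
  · have := Fin.val_ne_of_ne hr
    simp only [update_of_ne hr, comp_apply, Fin.succAbove, Fin.lt_def, Fin.val_castSucc,
      Fin.val_succ]
    split_ifs <;> first | rfl | omega

section Dual

variable {q n : ℕ} {φ : Fin n → ℕ → ℝ} {c : ℕ → ℝ} {ε : ℝ}

lemma Annihilates.card_support_gt (hnq : n ≤ q + 1)
    (hε : ∀ ν : Fin n → ℕ, StrictMono ν → (∀ i, ν i ≤ q) → 0 < ε * nodeDet φ ν)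
    (hc : Annihilates q n φ c) (hne : ∃ x ≤ q, c x ≠ 0) :
    n < ((range (q + 1)).filter (c · ≠ 0)).card := by
  by_contra h
  obtain ⟨U, hTU, hU, hUc⟩ :=
    exists_subsuperset_card_eq (filter_subset _ _) (not_lt.1 h) (by simpa using hnq)
  set μ := U.orderEmbOfFin hUc
  have hμq : ∀ i, μ i ≤ q := fun i =>
    Nat.lt_succ_iff.1 (mem_range.1 (hU (U.orderEmbOfFin_mem hUc i)))
  have hsupp : ∀ x ≤ q, c x ≠ 0 → x ∈ Set.range μ := fun x hx hcx => by
    rw [range_orderEmbOfFin]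
    exact hTU (mem_filter.2 ⟨mem_range.2 (Nat.lt_succ_of_le hx), hcx⟩)
  refine (hε μ μ.strictMono hμq).ne' ?_
  rw [(nodeDet_eq_zero_iff φ).2 ⟨fun i => c (μ i), fun h0 => ?_, fun j => ?_⟩, mul_zero]
  · obtain ⟨x, hx, hcx⟩ := hne
    obtain ⟨i, rfl⟩ := hsupp x hx hcx
    exact hcx (congrFun h0 i)
  · rw [← sum_range_eq_sum_comp μ.injective hμq fun x hx hcx =>
      hsupp x hx (left_ne_zero_of_mul hcx)]
    exact hc j

lemma Annihilates.hasSignAlternance_of_card_le (hnq : n ≤ q + 1)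
    (hε : ∀ ν : Fin n → ℕ, StrictMono ν → (∀ i, ν i ≤ q) → 0 < ε * nodeDet φ ν)
    (hc : Annihilates q n φ c) (hne : ∃ x ≤ q, c x ≠ 0)
    (hcard : ((range (q + 1)).filter (c · ≠ 0)).card ≤ n + 1) :
    HasSignAlternance q (n + 1) c := by
  set T := (range (q + 1)).filter (c · ≠ 0)
  have hT : T.card = n + 1 := le_antisymm hcard (hc.card_support_gt hnq hε hne)
  set y := T.orderEmbOfFin hT
  have hyT : ∀ i, y i ∈ T := T.orderEmbOfFin_mem hT
  have hyq : ∀ i, y i ≤ q := fun i => Nat.lt_succ_iff.1 (mem_range.1 (mem_filter.1 (hyT i)).1)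
  have hy0 : ∀ i, c (y i) ≠ 0 := fun i => (mem_filter.1 (hyT i)).2
  refine ⟨y, y.strictMono, hyq, exists_sign_alternating_of_mul_neg (hy0 0) fun i => ?_⟩
  -- swap the consecutive points `y i.castSucc`, `y i.succ` in the nodes `y` without `y i.succ`
  have hμ := y.strictMono.comp (Fin.strictMono_succAbove i.succ)
  have hμ' := y.strictMono.comp (Fin.strictMono_succAbove i.castSucc)
  have hexch := hc.exchange hμ.injective (t := y i.succ)
    (fun ⟨r, hr⟩ => Fin.succAbove_ne _ r (y.injective hr)) (fun _ => hyq _) (hyq _)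
    (fun x hx hcx => by
      rw [Set.range_comp, Fin.range_succAbove, Set.insert_image_compl_eq_range,
        range_orderEmbOfFin]
      exact mem_filter.2 ⟨mem_range.2 (Nat.lt_succ_of_le hx), hcx⟩) i
  rw [comp_apply, Fin.succAbove_succ_self, update_comp_succAbove_succ] at hexch
  have h₁ := hε _ hμ fun _ => hyq _
  have h₂ := hε _ hμ' fun _ => hyq _
  have hprod : 0 < nodeDet φ (y ∘ i.succ.succAbove) * nodeDet φ (y ∘ i.castSucc.succAbove) := by
    nlinarith [mul_pos h₁ h₂, sq_nonneg ε]
  exact lt_of_le_of_ne (nonpos_of_mul_nonpos_left (mul_mul_nonpos_of_add_eq_zero hexch) hprod)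
    (mul_ne_zero (hy0 _) (hy0 _))

lemma zero_mem_convexHull_of_forall_exists_mul_nonpos {X : Finset ℕ} {σ : ℕ → ℝ}
    (hX : ∀ h : Fin n → ℝ, ∃ x ∈ X, σ x * poly n φ h x ≤ 0) :
    (0 : Fin n → ℝ) ∈ convexHull ℝ ((fun x j => σ x * φ j x) '' X) := by
  set v : ℕ → Fin n → ℝ := fun x j => σ x * φ j x
  by_contra h0
  obtain ⟨L, u, hL0, hLu⟩ := geometric_hahn_banach_point_closed (convex_convexHull ℝ _)
    ((X.finite_toSet.image v).isCompact_convexHull ℝ).isClosed h0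
  obtain ⟨x, hx, hxh⟩ := hX fun j => L (Pi.single j 1)
  have hLv : L (v x) = σ x * poly n φ (fun j => L (Pi.single j 1)) x := by
    conv_lhs => rw [pi_eq_sum_univ' (v x)]
    simp [v, poly, mul_sum, mul_comm, mul_left_comm, mul_assoc]
  have := hLu (v x) (subset_convexHull ℝ _ (Set.mem_image_of_mem v hx))
  rw [map_zero] at hL0
  linarith

lemma exists_annihilates_of_forall_exists_mul_nonpos {X : Finset ℕ} (hXq : ∀ x ∈ X, x ≤ q)
    {σ : ℕ → ℝ} (hσ : ∀ x ∈ X, σ x ≠ 0)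
    (hX : ∀ h : Fin n → ℝ, ∃ x ∈ X, σ x * poly n φ h x ≤ 0) :
    ∃ c, Annihilates q n φ c ∧ (∃ x ≤ q, c x ≠ 0) ∧ (∀ x, c x ≠ 0 → x ∈ X ∧ 0 < c x * σ x) ∧
      ((range (q + 1)).filter (c · ≠ 0)).card ≤ n + 1 := by
  -- Carathéodory: `0` is a positive combination of at most `n + 1` of the vectors `σ x • φ(x)`
  obtain ⟨ι, _, z, w, hz, hai, hw, hw1, hwz⟩ :=
    eq_pos_convex_span_of_mem_convexHull (zero_mem_convexHull_of_forall_exists_mul_nonpos hX)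
  choose e he hez using fun i => hz (Set.mem_range_self i)
  have he_inj : Injective e := fun i j hij => hai.injective (by rw [← hez i, ← hez j, hij])
  have hcard : Fintype.card ι ≤ n + 1 := by
    have := hai.card_le_finrank_succ
    have := Submodule.finrank_le (vectorSpan ℝ (Set.range z))
    simp only [Module.finrank_fin_fun] at this
    omega
  obtain ⟨i₀⟩ : Nonempty ι := by
    by_contra h
    simp [not_nonempty_iff.1 h] at hw1
  set c := extend e (fun i => w i * σ (e i)) 0
  have hc_supp : ∀ x, c x ≠ 0 → x ∈ Set.range e := fun _ => mem_range_of_extend_ne_zero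
  refine ⟨c, annihilates_extend he_inj (fun i => hXq _ (he i)) fun j => ?_,
    ⟨e i₀, hXq _ (he i₀), ?_⟩, fun x hx => ?_, ?_⟩
  · simpa [← hez, mul_assoc] using congrFun hwz j
  · simpa [c, he_inj.extend_apply] using ⟨(hw i₀).ne', hσ _ (he i₀)⟩
  · obtain ⟨i, rfl⟩ := hc_supp x hx
    simp only [c, he_inj.extend_apply]
    exact ⟨he i, by rw [mul_assoc]; exact mul_pos (hw i) (mul_self_pos.2 (hσ _ (he i)))⟩
  · refine (card_le_card fun x hx => ?_).trans ((card_image_le (s := univ) (f := e)).trans ?_)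
    · obtain ⟨i, rfl⟩ := hc_supp x (mem_filter.1 hx).2
      exact mem_image_of_mem e (mem_univ i)
    · simpa using hcard

end Dual

lemma eventually_abs_sub_mul_lt {r p E : ℝ} (hr : |r| ≤ E) (hext : |r| = E → 0 < r * p) :
    ∀ᶠ δ in 𝓝[>] (0 : ℝ), |r - δ * p| < E := by
  rcases hr.lt_or_eq with hlt | heq
  · have : Tendsto (fun δ : ℝ => |r - δ * p|) (𝓝[>] 0) (𝓝 |r|) := by
      refine (Continuous.tendsto' ?_ 0 |r| (by simp)).mono_left nhdsWithin_le_nhds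
      fun_prop
    exact this.eventually (gt_mem_nhds hlt)
  · have hrp := hext heq
    have : Tendsto (fun δ : ℝ => δ * p ^ 2) (𝓝[>] 0) (𝓝 0) := by
      refine (Continuous.tendsto' ?_ 0 0 (by simp)).mono_left nhdsWithin_le_nhds
      fun_prop
    filter_upwards [this.eventually (gt_mem_nhds (by positivity : (0 : ℝ) < 2 * (r * p))),
      self_mem_nhdsWithin] with δ h₁ (h₂ : 0 < δ)
    rw [← heq, ← sq_lt_sq]
    nlinarith [mul_pos h₂ (sub_pos.2 h₁)]

section Chebyshev

variable {q n : ℕ} {φ : Fin n → ℕ → ℝ} {f : ℕ → ℝ} {a : Fin n → ℝ}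

lemma IsBestApprox.exists_extremal_mul_nonpos (hbest : IsBestApprox q n φ f a)
    (h : Fin n → ℝ) : ∃ x ≤ q, |poly n φ a x - f x| = normZ q (fun y => poly n φ a y - f y) ∧
      (poly n φ a x - f x) * poly n φ h x ≤ 0 := by
  set r := fun y => poly n φ a y - f y
  by_contra! hpos
  have hev : ∀ᶠ δ in 𝓝[>] (0 : ℝ), ∀ x ∈ range (q + 1), |r x - δ * poly n φ h x| < normZ q r := by
    refine (eventually_all_finset _).2 fun x hx => ?_
    have hxq := Nat.lt_succ_iff.1 (mem_range.1 hx)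
    exact eventually_abs_sub_mul_lt (abs_le_normZ q r hxq) (hpos x hxq)
  obtain ⟨δ, hδ⟩ := hev.exists
  refine (hbest (a - δ • h)).not_gt ?_
  rw [normZ_sub_comm q f (poly n φ a), normZ_sub_comm, normZ_lt_iff]
  intro x hx
  simpa [r, poly_sub_smul, sub_right_comm] using hδ x (mem_range.2 (Nat.lt_succ_of_le hx))

lemma hasAlternance_of_normZ_eq_zero (hnq : n ≤ q)
    (h : normZ q (fun x => poly n φ a x - f x) = 0) : HasAlternance q n φ f a := by
  refine ⟨Fin.val, Fin.val_strictMono, fun i => by omega, 1, Or.inl rfl, fun i => ?_⟩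
  have := h ▸ abs_le_normZ q (fun x => poly n φ a x - f x) (show (i : ℕ) ≤ q by omega)
  rw [h, abs_nonpos_iff.1 this, mul_zero]

theorem DetsSameSign.hasAlternance (hnq : n ≤ q) (hC : DetsSameSign q n φ)
    (hbest : IsBestApprox q n φ f a) : HasAlternance q n φ f a := by
  obtain ⟨ε, -, hε⟩ := hC
  set r := fun x => poly n φ a x - f x
  rcases ((abs_nonneg _).trans (abs_le_normZ q r (Nat.zero_le q))).eq_or_lt with hE | hE
  · exact hasAlternance_of_normZ_eq_zero hnq hE.symm
  set X := (range (q + 1)).filter fun x => |r x| = normZ q r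
  have hXq : ∀ x ∈ X, x ≤ q := fun x hx => Nat.lt_succ_iff.1 (mem_range.1 (mem_filter.1 hx).1)
  obtain ⟨c, hc, hc0, hcX, hcard⟩ := exists_annihilates_of_forall_exists_mul_nonpos hXq
    (σ := r) (fun x hx => abs_pos.1 ((mem_filter.1 hx).2 ▸ hE)) fun h => by
      obtain ⟨x, hx, hxE, hxh⟩ := hbest.exists_extremal_mul_nonpos h
      exact ⟨x, mem_filter.2 ⟨mem_range.2 (Nat.lt_succ_of_le hx), hxE⟩, hxh⟩
  obtain ⟨ν, hν, hq, ε', hε', halt⟩ := hc.hasSignAlternance_of_card_le (by omega) hε hc0 hcard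
  refine ⟨ν, hν, hq, ε', hε', fun i => ?_⟩
  obtain ⟨hX, hcr⟩ := hcX _ (right_ne_zero_of_mul (halt i).ne')
  have hpos : 0 < ε' * (-1) ^ (i : ℕ) * r (ν i) := by
    nlinarith [mul_pos (halt i) hcr, mul_self_nonneg (c (ν i))]
  calc ε' * (-1) ^ (i : ℕ) * r (ν i) = |ε' * (-1) ^ (i : ℕ) * r (ν i)| := (abs_of_pos hpos).symm
    _ = normZ q r := by
      rw [abs_mul, abs_mul, abs_pow, abs_neg, abs_one, one_pow, (mem_filter.1 hX).2]
      rcases hε' with rfl | rfl <;> simp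

end Chebyshev

theorem stmt_1_general (q n : ℕ) (hnq : n ≤ q)
    (φ : Fin n → ℕ → ℝ) :
    (IsTZ q n φ ↔
      ∀ (f : ℕ → ℝ) (a : Fin n → ℝ), IsBestApprox q n φ f a → HasAlternance q n φ f a)
    ∧
    (IsTZ q n φ ↔ DetsSameSign q n φ) := by
  have hac : IsTZ q n φ ↔ DetsSameSign q n φ :=
    ⟨IsTZ.detsSameSign (by omega), DetsSameSign.isTZ⟩
  exact ⟨⟨fun hA _ _ => (hac.1 hA).hasAlternance hnq,
    fun hB => hac.2 (detsSameSign_of_forall_hasAlternance (by omega) hB)⟩, hac⟩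

/-- For a linearly independent system `φ₁,…,φₙ ⊂ C[0,q]_ℤ` with
`1 ≤ n ≤ q`, the following are equivalent: (a) `{φₖ}` is a `T_ℤ`-system;
(b) for every `f ∈ C[0,q]_ℤ`, every best uniform approximant of `f` from `L_n`
admits an alternance set of length `n+1`; (c) all determinants over increasing
node choices are nonzero and have the same sign. -/
theorem stmt_1 (q n : ℕ) (hn : 1 ≤ n) (hnq : n ≤ q)
    (φ : Fin n → ℕ → ℝ) (hli : LinIndepOn q n φ) :
    (IsTZ q n φ ↔
      ∀ (f : ℕ → ℝ) (a : Fin n → ℝ), IsBestApprox q n φ f a → HasAlternance q n φ f a)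
    ∧
    (IsTZ q n φ ↔ DetsSameSign q n φ) :=
  stmt_1_general q n hnq φ

end DiscPaper
end

section
/- Let q ∈ ℕ, 1 ≤ n ≤ q+1, and let {φ_k}_{k=1}^n ⊂ C[0,q]_Z be a T_Z-system. Then every nontrivial polynomial p ∈ L_n satisfies S^+(p) ≤ n−1. -/
namespace DiscPaper

lemma card_le_of_inj (m : ℕ) (q : ℕ) (f : ℕ → ℕ) (Z : Set ℕ) (hZ : Z ⊆ Set.Iic q)
    (hf : ∀ i < m, f i ∈ Z) (hinj : ∀ i j, i < m → j < m → f i = f j → i = j) :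
    m ≤ Z.ncard := by
  have hfin : Z.Finite := (Set.finite_Iic q).subset hZ
  have hsub : (Finset.image f (Finset.range m)) ⊆ hfin.toFinset := by
    intro x hx
    simp only [Finset.mem_image, Finset.mem_range] at hx
    obtain ⟨i, hi, rfl⟩ := hx
    simpa using hf i hi
  have hcard : (Finset.image f (Finset.range m)).card = m := by
    rw [Finset.card_image_of_injOn, Finset.card_range]
    intro i hi j hj h
    exact hinj i j (Finset.mem_range.mp hi) (Finset.mem_range.mp hj) h
  calc m = (Finset.image f (Finset.range m)).card := hcard.symm
    _ ≤ hfin.toFinset.card := Finset.card_le_card hsub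
    _ = Z.ncard := (Set.ncard_eq_toFinset_card Z hfin).symm

lemma zero_between (q : ℕ) (r : ℕ → ℝ) :
    ∀ d x, x + d + 1 ≤ q → r x * r (x + d + 1) < 0 →
      ∃ ν, x < ν ∧ ν ≤ x + d + 1 ∧ IsZero q r ν := by
  intro d
  induction d with
  | zero =>
    intro x hq h
    exact ⟨x + 1, by omega, le_refl _, Or.inr ⟨by omega, hq, by simpa using h⟩⟩
  | succ d ih =>
    intro x hq h
    rcases eq_or_ne (r (x + d + 1)) 0 with h0 | h0
    · exact ⟨x + d + 1, by omega, by omega, Or.inl ⟨by omega, h0⟩⟩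
    · rcases lt_trichotomy (r x * r (x + d + 1)) 0 with hlt | heq | hgt
      · obtain ⟨ν, h1, h2, h3⟩ := ih x (by omega) hlt
        exact ⟨ν, h1, by omega, h3⟩
      · exfalso
        have hx : r x ≠ 0 := by
          intro hx; rw [hx] at h; simp at h
        exact (mul_ne_zero hx h0) heq
      · refine ⟨x + d + 2, by omega, by omega, Or.inr ⟨by omega, by omega, ?_⟩⟩
        have : x + d + 2 - 1 = x + d + 1 := by omega
        rw [this]
        have hq2 : r x * r (x + (d+1) + 1) < 0 := h
        have : x + (d+1) + 1 = x + d + 2 := by ring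
        rw [this] at hq2
        nlinarith [sq_nonneg (r x)]

lemma alt_imp_zeros (q m : ℕ) (r : ℕ → ℝ) (μ : ℕ → ℕ)
    (hmono : ∀ i < m, μ i < μ (i + 1)) (hle : μ m ≤ q)
    (halt : ∀ i < m, r (μ i) * r (μ (i + 1)) < 0) : m ≤ N q r := by
  have hmono' : ∀ i k, i ≤ k → k ≤ m → μ i ≤ μ k := by
    intro i k hik hkm
    induction k with
    | zero =>
      have : i = 0 := by omega
      simp [this]
    | succ k ihk =>
      rcases Nat.lt_or_ge i (k+1) with h | h
      · exact le_trans (ihk (by omega) (by omega)) (le_of_lt (hmono k (by omega)))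
      · have : i = k + 1 := by omega
        simp [this]
  have hzero : ∀ i < m, ∃ ν, μ i < ν ∧ ν ≤ μ (i + 1) ∧ IsZero q r ν := by
    intro i hi
    have h1 : μ i < μ (i+1) := hmono i hi
    have h2 : μ (i+1) ≤ q := le_trans (hmono' (i+1) m (by omega) (le_refl m)) hle
    obtain ⟨d, hd⟩ : ∃ d, μ (i+1) = μ i + d + 1 := ⟨μ (i+1) - μ i - 1, by omega⟩
    obtain ⟨ν, ha, hb, hc⟩ := zero_between q r d (μ i) (by omega) (by rw [← hd]; exact halt i hi)
    exact ⟨ν, ha, by omega, hc⟩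
  choose ν h1 h2 h3 using hzero
  -- make total function
  classical
  set f : ℕ → ℕ := fun i => if h : i < m then ν i h else 0 with hf
  show m ≤ Set.ncard {ν : ℕ | IsZero q r ν}
  apply card_le_of_inj m q f
  · intro x hx
    rcases hx with ⟨hx, _⟩ | ⟨_, hx, _⟩ <;> exact Set.mem_Iic.mpr hx
  · intro i hi
    simp only [hf, dif_pos hi]
    exact h3 i hi
  · intro i j hi hj hij
    simp only [hf, dif_pos hi, dif_pos hj] at hij
    by_contra hne
    rcases Nat.lt_or_ge i j with h | h
    · have : ν i hi ≤ μ (i+1) := h2 i hi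
      have : μ (i+1) ≤ μ j := hmono' (i+1) j h (by omega)
      have : μ j < ν j hj := h1 j hj
      omega
    · have hji : j < i := by omega
      have : ν j hj ≤ μ (j+1) := h2 j hj
      have : μ (j+1) ≤ μ i := hmono' (j+1) i hji (by omega)
      have : μ i < ν i hi := h1 i hi
      omega

lemma alt_of_signChanges (m : ℕ) : ∀ (q : ℕ) (g : ℕ → ℝ), (∀ ν ≤ q, g ν ≠ 0) →
    m ≤ signChanges q g →
    ∃ μ : ℕ → ℕ, (∀ i < m, μ i < μ (i + 1)) ∧ μ m ≤ q ∧
      ∀ i < m, g (μ i) * g (μ (i + 1)) < 0 := by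
  induction m with
  | zero =>
    intro q g hg _
    exact ⟨fun _ => 0, fun i hi => absurd hi (by omega), Nat.zero_le q, fun i hi => absurd hi (by omega)⟩
  | succ m ih =>
    intro q g hg hcard
    set S : Set ℕ := {ν : ℕ | 1 ≤ ν ∧ ν ≤ q ∧ g (ν - 1) * g ν < 0} with hS
    have hfin : S.Finite := (Set.finite_Iic q).subset (fun x hx => Set.mem_Iic.mpr hx.2.1)
    have hne : hfin.toFinset.Nonempty := by
      rw [← Finset.card_pos, ← Set.ncard_eq_toFinset_card S hfin]
      have : m + 1 ≤ S.ncard := hcard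
      omega
    set t := hfin.toFinset.max' hne with ht
    have htS : t ∈ S := by
      have := hfin.toFinset.max'_mem hne
      simpa using this
    have htmax : ∀ s ∈ S, s ≤ t := by
      intro s hs
      exact hfin.toFinset.le_max' s (by simpa using hs)
    obtain ⟨ht1, htq, htlt⟩ := htS
    have hsub : S \ {t} ⊆ {ν : ℕ | 1 ≤ ν ∧ ν ≤ t - 1 ∧ g (ν - 1) * g ν < 0} := by
      rintro s ⟨hs, hst⟩
      have := htmax s hs
      have hst' : s ≠ t := by simpa using hst
      exact ⟨hs.1, by omega, hs.2.2⟩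
    have hm : m ≤ signChanges (t - 1) g := by
      have h1 : (S \ {t}).ncard + 1 = S.ncard := Set.ncard_diff_singleton_add_one ⟨ht1, htq, htlt⟩ hfin
      have h2 : (S \ {t}).ncard ≤ signChanges (t-1) g :=
        Set.ncard_le_ncard hsub ((Set.finite_Iic (t-1)).subset (fun x hx => Set.mem_Iic.mpr hx.2.1))
      have : m + 1 ≤ S.ncard := hcard
      omega
    obtain ⟨μ, hmono, hle, halt⟩ := ih (t - 1) g (fun ν hv => hg ν (by omega)) hm
    by_cases hcase : g (μ m) * g t < 0
    · refine ⟨fun i => if i ≤ m then μ i else t, ?_, ?_, ?_⟩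
      · intro i hi
        rcases Nat.lt_or_ge i m with h | h
        · simp only [if_pos (by omega : i ≤ m), if_pos (by omega : i + 1 ≤ m)]
          exact hmono i h
        · have him : i = m := by omega
          simp only [him, if_pos (le_refl m), if_neg (by omega : ¬ m + 1 ≤ m)]
          omega
      · simp only [if_neg (by omega : ¬ m + 1 ≤ m)]
        exact htq
      · intro i hi
        rcases Nat.lt_or_ge i m with h | h
        · simp only [if_pos (by omega : i ≤ m), if_pos (by omega : i + 1 ≤ m)]
          exact halt i h
        · have him : i = m := by omega
          simp only [him, if_pos (le_refl m), if_neg (by omega : ¬ m + 1 ≤ m)]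
          exact hcase
    · have hmne : g (μ m) ≠ 0 := hg (μ m) (by omega)
      have htne : g t ≠ 0 := hg t htq
      have hpos : 0 < g (μ m) * g t := lt_of_le_of_ne (not_lt.mp hcase) (Ne.symm (mul_ne_zero hmne htne))
      have hne' : μ m ≠ t - 1 := by
        intro h
        rw [h] at hpos
        nlinarith
      have hlt' : μ m < t - 1 := by omega
      have hneg : g (μ m) * g (t - 1) < 0 := by
        nlinarith [sq_nonneg (g t), mul_self_pos.mpr htne]
      refine ⟨fun i => if i ≤ m then μ i else t - 1, ?_, ?_, ?_⟩
      · intro i hi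
        rcases Nat.lt_or_ge i m with h | h
        · simp only [if_pos (by omega : i ≤ m), if_pos (by omega : i + 1 ≤ m)]
          exact hmono i h
        · have him : i = m := by omega
          simp only [him, if_pos (le_refl m), if_neg (by omega : ¬ m + 1 ≤ m)]
          omega
      · simp only [if_neg (by omega : ¬ m + 1 ≤ m)]
        omega
      · intro i hi
        rcases Nat.lt_or_ge i m with h | h
        · simp only [if_pos (by omega : i ≤ m), if_pos (by omega : i + 1 ≤ m)]
          exact halt i h
        · have him : i = m := by omega
          simp only [him, if_pos (le_refl m), if_neg (by omega : ¬ m + 1 ≤ m)]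
          exact hneg

lemma poly_add (n : ℕ) (φ : Fin n → ℕ → ℝ) (a b : Fin n → ℝ) (ν : ℕ) :
    poly n φ (a + b) ν = poly n φ a ν + poly n φ b ν := by
  simp [poly, add_mul, Finset.sum_add_distrib]

lemma poly_smul (n : ℕ) (φ : Fin n → ℕ → ℝ) (c : ℝ) (a : Fin n → ℝ) (ν : ℕ) :
    poly n φ (c • a) ν = c * poly n φ a ν := by
  simp [poly, Finset.mul_sum, mul_assoc]

lemma interp (q n : ℕ) (hn : 1 ≤ n) (φ : Fin n → ℕ → ℝ) (hTZ : IsTZ q n φ)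
    (x : Fin n → ℕ) (hx : Function.Injective x) (hxq : ∀ i, x i ≤ q) (v : Fin n → ℝ) :
    ∃ b : Fin n → ℝ, ∀ i, poly n φ b (x i) = v i := by
  classical
  let T : (Fin n → ℝ) →ₗ[ℝ] (Fin n → ℝ) :=
    { toFun := fun b => fun i => poly n φ b (x i)
      map_add' := fun a b => by funext i; exact poly_add n φ a b (x i)
      map_smul' := fun c a => by funext i; exact poly_smul n φ c a (x i) }
  have hinj : Function.Injective T := by
    rw [← LinearMap.ker_eq_bot, LinearMap.ker_eq_bot']
    intro b hb
    by_contra hb0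
    have hzero : ∀ i, IsZero q (poly n φ b) (x i) := by
      intro i
      exact Or.inl ⟨hxq i, congrFun hb i⟩
    have hcard : n ≤ N q (poly n φ b) := by
      show n ≤ Set.ncard {ν : ℕ | IsZero q (poly n φ b) ν}
      apply card_le_of_inj n q (fun i => if h : i < n then x ⟨i, h⟩ else 0)
      · intro y hy
        rcases hy with ⟨hy, _⟩ | ⟨_, hy, _⟩ <;> exact Set.mem_Iic.mpr hy
      · intro i hi
        simp only [dif_pos hi]
        exact hzero ⟨i, hi⟩
      · intro i j hi hj hij
        simp only [dif_pos hi, dif_pos hj] at hij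
        exact Fin.mk.inj_iff.mp (hx hij)
    have := hTZ b hb0
    omega
  have hsurj := LinearMap.injective_iff_surjective.mp hinj
  obtain ⟨b, hb⟩ := hsurj v
  exact ⟨b, fun i => congrFun hb i⟩

lemma small_eps (m : ℕ) (p u : ℕ → ℝ) :
    ∃ ε : ℝ, 0 < ε ∧ ∀ i < m, p i = 0 ∨ ε * |u i| < |p i| := by
  induction m with
  | zero => exact ⟨1, one_pos, fun i hi => absurd hi (by omega)⟩
  | succ m ih =>
    obtain ⟨ε, hε, hεp⟩ := ih
    rcases eq_or_ne (p m) 0 with h0 | h0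
    · refine ⟨ε, hε, fun i hi => ?_⟩
      rcases Nat.lt_or_ge i m with h | h
      · exact hεp i h
      · have : i = m := by omega
        exact Or.inl (this ▸ h0)
    · have hpm : 0 < |p m| := abs_pos.mpr h0
      have hum : 0 < |u m| + 1 := by positivity
      refine ⟨min ε (|p m| / (2 * (|u m| + 1))), lt_min hε (by positivity), fun i hi => ?_⟩
      rcases Nat.lt_or_ge i m with h | h
      · rcases hεp i h with h1 | h1
        · exact Or.inl h1
        · refine Or.inr (lt_of_le_of_lt ?_ h1)
          have := min_le_left ε (|p m| / (2 * (|u m| + 1)))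
          have h2 : (0:ℝ) ≤ |u i| := abs_nonneg _
          nlinarith
      · have him : i = m := by omega
        subst him
        refine Or.inr ?_
        have h3 : min ε (|p i| / (2 * (|u i| + 1))) ≤ |p i| / (2 * (|u i| + 1)) := min_le_right _ _
        have h2 : (0:ℝ) ≤ |u i| := abs_nonneg _
        have h4 : 0 < |u i| + 1 := by positivity
        have hmin : 0 < min ε (|p i| / (2 * (|u i| + 1))) := lt_min hε (by positivity)
        have h5 : |p i| / (2 * (|u i| + 1)) * (2 * (|u i| + 1)) = |p i| :=
          div_mul_cancel₀ _ (by positivity)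
        nlinarith

lemma neg_one_pow_sq (i : ℕ) : ((-1:ℝ)^i) * ((-1:ℝ)^i) = 1 := by
  rw [← pow_add, ← two_mul, pow_mul]
  norm_num

/-- If `{φₖ}ₖ₌₁ⁿ ⊂ C[0,q]_ℤ` (linearly independent, `1 ≤ n ≤ q+1`) is a
`T_ℤ`-system, then every nontrivial polynomial `p ∈ L_n` satisfies `S⁺(p) ≤ n-1`. -/
theorem stmt_3 (q n : ℕ) (hn : 1 ≤ n) (hnq : n ≤ q + 1)
    (φ : Fin n → ℕ → ℝ) (hli : LinIndepOn q n φ) (hTZ : IsTZ q n φ) :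
    ∀ a : Fin n → ℝ, a ≠ 0 → Splus q (poly n φ a) ≤ n - 1 := by
  intro a ha
  apply csSup_le'
  rintro s ⟨g, ⟨hgne, hgeq⟩, rfl⟩
  by_contra hcon
  have hs : n ≤ signChanges q g := by omega
  obtain ⟨μ, hmono, hle, halt⟩ := alt_of_signChanges n q g hgne hs
  set p := poly n φ a with hp
  have hmono' : ∀ i k, i ≤ k → k ≤ n → μ i ≤ μ k := by
    intro i k hik hkm
    induction k with
    | zero =>
      have : i = 0 := by omega
      simp [this]
    | succ k ihk =>
      rcases Nat.lt_or_ge i (k+1) with h | h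
      · exact le_trans (ihk (by omega) (by omega)) (le_of_lt (hmono k (by omega)))
      · have : i = k + 1 := by omega
        simp [this]
  have hsm : ∀ i k, i < k → k ≤ n → μ i < μ k := by
    intro i k hik hkm
    have h1 : μ i ≤ μ (k-1) := hmono' i (k-1) (by omega) (by omega)
    have h2 : μ (k-1) < μ (k-1+1) := hmono (k-1) (by omega)
    have : k - 1 + 1 = k := by omega
    rw [this] at h2
    omega
  have hμq : ∀ i ≤ n, μ i ≤ q := fun i hi => le_trans (hmono' i n hi le_rfl) hle
  set c : ℝ := if 0 < g (μ 0) then 1 else -1 with hc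
  have hc2 : c * c = 1 := by
    by_cases h : 0 < g (μ 0) <;> simp [hc, h]
  have hsign : ∀ i ≤ n, 0 < c * (-1:ℝ)^i * g (μ i) := by
    intro i
    induction i with
    | zero =>
      intro _
      have hne : g (μ 0) ≠ 0 := hgne (μ 0) (hμq 0 (by omega))
      by_cases h : 0 < g (μ 0)
      · simpa [hc, h] using h
      · have hne' : g (μ 0) < 0 := lt_of_le_of_ne (not_lt.mp h) hne
        simp only [hc, if_neg h, pow_zero, mul_one, neg_one_mul]
        linarith
    | succ i ih =>
      intro hi
      have ihp := ih (by omega)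
      have hprod := halt i (by omega)
      have hA : (c * (-1:ℝ)^i) * (c * (-1:ℝ)^i) = 1 := by
        calc (c * (-1:ℝ)^i) * (c * (-1:ℝ)^i) = (c*c) * ((-1:ℝ)^i * (-1:ℝ)^i) := by ring
          _ = 1 := by rw [hc2, neg_one_pow_sq]; norm_num
      have hgoal : c * (-1:ℝ)^(i+1) = -(c * (-1:ℝ)^i) := by
        rw [pow_succ]; ring
      rw [hgoal]
      nlinarith [ihp, hprod, hA]
  -- find a point where p is nonzero
  have hj : ∃ j ≤ n, p (μ j) ≠ 0 := by
    by_contra hno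
    push_neg at hno
    have hcard : n + 1 ≤ N q p := by
      show n + 1 ≤ Set.ncard {ν : ℕ | IsZero q p ν}
      apply card_le_of_inj (n+1) q μ
      · intro y hy
        rcases hy with ⟨hy, _⟩ | ⟨_, hy, _⟩ <;> exact Set.mem_Iic.mpr hy
      · intro i hi
        exact Or.inl ⟨hμq i (by omega), hno i (by omega)⟩
      · intro i k hi hk hik
        by_contra hne
        rcases Nat.lt_or_ge i k with h | h
        · have := hsm i k h (by omega); omega
        · have := hsm k i (by omega) (by omega); omega
    have h9 : N q p ≤ n - 1 := hTZ a ha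
    omega
  obtain ⟨j, hjn, hpj⟩ := hj
  -- interpolation nodes: skip index j
  set sk : ℕ → ℕ := fun i => if i < j then i else i + 1 with hsk
  have hskn : ∀ i < n, sk i ≤ n := by
    intro i hi
    simp only [hsk]
    split <;> omega
  set x : Fin n → ℕ := fun i => μ (sk i) with hx
  have hxinj : Function.Injective x := by
    intro i k hik
    simp only [hx] at hik
    have h1 : sk i = sk k := by
      by_contra hne
      rcases Nat.lt_or_ge (sk i) (sk k) with h | h
      · have := hsm _ _ h (hskn k k.isLt); omega
      · have hne' : sk k < sk i := by omega
        have := hsm _ _ hne' (hskn i i.isLt); omega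
    have : (i:ℕ) = (k:ℕ) := by
      simp only [hsk] at h1
      split at h1 <;> split at h1 <;> omega
    exact Fin.ext this
  have hxq : ∀ i, x i ≤ q := fun i => hμq _ (hskn i i.isLt)
  obtain ⟨b, hb⟩ := interp q n hn φ hTZ x hxinj hxq (fun i => c * (-1:ℝ)^(sk i))
  set u := poly n φ b with hu
  obtain ⟨ε, hε, hsmall⟩ := small_eps (n+1) (fun i => p (μ i)) (fun i => u (μ i))
  set r := poly n φ (a + ε • b) with hr
  have hrval : ∀ ν, r ν = p ν + ε * u ν := by
    intro ν
    rw [hr, poly_add, poly_smul]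
  -- u value at zero points
  have huval : ∀ i ≤ n, i ≠ j → u (μ i) = c * (-1:ℝ)^i := by
    intro i hi hij
    rcases Nat.lt_or_ge i j with h | h
    · have hin : i < n := by omega
      have hski : sk i = i := by simp [hsk, h]
      have hbi := hb ⟨i, hin⟩
      simp only [hx] at hbi
      rw [hski] at hbi
      exact hbi
    · have hij' : j < i := by omega
      have hin : i - 1 < n := by omega
      have hski : sk (i-1) = i := by
        simp only [hsk]
        rw [if_neg (by omega)]
        omega
      have hbi := hb ⟨i-1, hin⟩
      simp only [hx] at hbi
      rw [hski] at hbi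
      exact hbi
  have hkey : ∀ i ≤ n, 0 < c * (-1:ℝ)^i * r (μ i) := by
    intro i hi
    have hA : (c * (-1:ℝ)^i) * (c * (-1:ℝ)^i) = 1 := by
      calc (c * (-1:ℝ)^i) * (c * (-1:ℝ)^i) = (c*c) * ((-1:ℝ)^i * (-1:ℝ)^i) := by ring
        _ = 1 := by rw [hc2, neg_one_pow_sq]; norm_num
    rw [hrval]
    rcases eq_or_ne (p (μ i)) 0 with h0 | h0
    · have hij : i ≠ j := fun h => hpj (h ▸ h0)
      rw [h0, huval i hi hij]
      have : c * (-1:ℝ)^i * (0 + ε * (c * (-1:ℝ)^i)) = ε * ((c * (-1:ℝ)^i) * (c * (-1:ℝ)^i)) := by ring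
      rw [this, hA]
      linarith
    · have hgp : g (μ i) = p (μ i) := hgeq (μ i) (hμq i hi) h0
      have hsgn : 0 < c * (-1:ℝ)^i * p (μ i) := hgp ▸ hsign i hi
      have hsm2 : ε * |u (μ i)| < |p (μ i)| := by
        rcases hsmall i (by omega) with h | h
        · exact absurd h h0
        · exact h
      have habs : |c * (-1:ℝ)^i| = 1 := by
        rw [abs_mul, abs_pow]
        have hcabs : |c| = 1 := by
          by_cases h : 0 < g (μ 0) <;> simp [hc, h]
        rw [hcabs]
        norm_num
      have h1 : c * (-1:ℝ)^i * p (μ i) = |p (μ i)| := by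
        have := abs_mul (c * (-1:ℝ)^i) (p (μ i))
        rw [abs_of_pos hsgn, habs, one_mul] at this
        exact this
      have h2 : c * (-1:ℝ)^i * u (μ i) ≥ -|u (μ i)| := by
        have := neg_abs_le (c * (-1:ℝ)^i * u (μ i))
        have heq : |c * (-1:ℝ)^i * u (μ i)| = |u (μ i)| := by
          rw [abs_mul, habs, one_mul]
        linarith [heq ▸ this]
      nlinarith
  have halt' : ∀ i < n, r (μ i) * r (μ (i+1)) < 0 := by
    intro i hi
    have h1 := hkey i (by omega)
    have h2 := hkey (i+1) (by omega)
    have hid : (c * (-1:ℝ)^i * r (μ i)) * (c * (-1:ℝ)^(i+1) * r (μ (i+1)))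
        = -(r (μ i) * r (μ (i+1))) := by
      rw [pow_succ]
      calc (c * (-1:ℝ)^i * r (μ i)) * (c * ((-1:ℝ)^i * -1) * r (μ (i+1)))
          = -((c*c) * ((-1:ℝ)^i * (-1:ℝ)^i) * (r (μ i) * r (μ (i+1)))) := by ring
        _ = -(r (μ i) * r (μ (i+1))) := by rw [hc2, neg_one_pow_sq]; ring
    nlinarith [mul_pos h1 h2]
  have hab : a + ε • b ≠ 0 := by
    intro h
    have : r (μ 0) = 0 := by
      rw [hr, h]
      simp [poly]
    have hk := hkey 0 (by omega)
    rw [this] at hk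
    simp at hk
  have hN : n ≤ N q r := alt_imp_zeros q n r μ hmono hle halt'
  have h9 : N q r ≤ n - 1 := hTZ (a + ε • b) hab
  omega


end DiscPaper
end

section
/- Let q ∈ ℕ, 1 ≤ n ≤ q, let {φ_k}_{k=1}^n ⊂ C[0,q]_Z be a T_0-system, and let p ∈ L_n satisfy N(p) = n. Then there exist integers 0 ≤ ν_1 < ⋯ < ν_{n+1} ≤ q with the following property: if Σ_{i=1}^{n+1} (−1)^i ρ_i p(ν_i) = 0 for some positive real numbers ρ_1,…,ρ_{n+1}, then p is identically zero. -/
namespace DiscPaper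

-- ===== auxiliary development =====

open Classical in
noncomputable def prevIdx (p : ℕ → ℝ) (ν : ℕ) : ℕ := Nat.findGreatest (fun j => p j ≠ 0) ν

noncomputable def firstIdx (p : ℕ → ℝ) : ℕ := sInf {j | p j ≠ 0}

open Classical in
noncomputable def gfun (p : ℕ → ℝ) (ν : ℕ) : ℝ :=
  if p (prevIdx p ν) ≠ 0 then (-1 : ℝ) ^ (ν - prevIdx p ν) * p (prevIdx p ν)
  else (-1 : ℝ) ^ (firstIdx p - ν) * p (firstIdx p)

lemma helper_neg {x : ℝ} (hx : x ≠ 0) (e : ℕ) :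
    ((-1:ℝ)^(e+1) * x) * ((-1:ℝ)^e * x) < 0 := by
  have h1 : ((-1:ℝ)^e) * ((-1:ℝ)^e) = 1 := by
    rw [← pow_add]; exact Even.neg_one_pow ⟨e, rfl⟩
  have h2 : ((-1:ℝ)^(e+1) * x) * ((-1:ℝ)^e * x)
      = ((-1:ℝ)^e * (-1:ℝ)^e) * (-(x * x)) := by
    rw [pow_succ]; ring
  rw [h2, h1, one_mul]
  have := mul_self_pos.mpr hx
  linarith

lemma firstIdx_spec (p : ℕ → ℝ) (hne : ∃ j, p j ≠ 0) : p (firstIdx p) ≠ 0 :=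
  Nat.sInf_mem hne

lemma firstIdx_min (p : ℕ → ℝ) {j : ℕ} (h : j < firstIdx p) : p j = 0 := by
  by_contra hj
  have h2 : sInf {j | p j ≠ 0} ≤ j := Nat.sInf_le hj
  unfold firstIdx at h
  omega

lemma gfun_ne_zero (p : ℕ → ℝ) (hne : ∃ j, p j ≠ 0) (ν : ℕ) : gfun p ν ≠ 0 := by
  classical
  unfold gfun
  split_ifs with h
  · exact mul_ne_zero (pow_ne_zero _ (by norm_num)) h
  · exact mul_ne_zero (pow_ne_zero _ (by norm_num)) (firstIdx_spec p hne)

lemma gfun_eq (p : ℕ → ℝ) {ν : ℕ} (h : p ν ≠ 0) : gfun p ν = p ν := by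
  classical
  have hp : prevIdx p ν = ν := Nat.findGreatest_eq h
  unfold gfun
  rw [hp, if_pos h, Nat.sub_self, pow_zero, one_mul]

lemma prevIdx_le (p : ℕ → ℝ) (ν : ℕ) : prevIdx p ν ≤ ν := Nat.findGreatest_le ν

lemma change_at_zero (p : ℕ → ℝ) (hne : ∃ j, p j ≠ 0) {ν : ℕ} (hν : 1 ≤ ν)
    (hz : p ν = 0) : gfun p (ν - 1) * gfun p ν < 0 := by
  classical
  obtain ⟨m, rfl⟩ : ∃ m, ν = m + 1 := ⟨ν - 1, by omega⟩
  simp only [Nat.add_sub_cancel]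
  have hpe : prevIdx p (m+1) = prevIdx p m := by
    unfold prevIdx
    rw [Nat.findGreatest_succ, if_neg (by simp [hz])]
  by_cases hp : p (prevIdx p m) ≠ 0
  · set j := prevIdx p m with hj
    have hjm : j ≤ m := prevIdx_le p m
    have e1 : gfun p m = (-1:ℝ)^(m - j) * p j := by
      unfold gfun; rw [if_pos hp]
    have e2 : gfun p (m+1) = (-1:ℝ)^((m - j) + 1) * p j := by
      unfold gfun
      rw [hpe, if_pos hp, show m + 1 - j = (m - j) + 1 by omega]
    rw [e1, e2, mul_comm]
    exact helper_neg hp _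
  · push_neg at hp
    have hall : ∀ j ≤ m, p j = 0 := by
      intro j hj
      by_contra h
      have hspec : p (prevIdx p m) ≠ 0 := by
        unfold prevIdx; exact Nat.findGreatest_spec (P := fun j => p j ≠ 0) hj h
      exact hspec hp
    have hbig : m + 1 < firstIdx p := by
      rcases lt_or_ge m.succ (firstIdx p) with h | h
      · exact h
      · exfalso
        have := firstIdx_spec p hne
        rcases Nat.lt_succ_iff_lt_or_eq.mp (Nat.lt_succ_of_le h) with h' | h'
        · exact this (hall _ (by omega))
        · exact this (h' ▸ hz)
    have e1 : gfun p m = (-1:ℝ)^((firstIdx p - (m+1)) + 1) * p (firstIdx p) := by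
      unfold gfun
      rw [if_neg (not_not_intro hp), show firstIdx p - m = (firstIdx p - (m+1)) + 1 by omega]
    have e2 : gfun p (m+1) = (-1:ℝ)^(firstIdx p - (m+1)) * p (firstIdx p) := by
      unfold gfun
      rw [hpe, if_neg (not_not_intro hp)]
    rw [e1, e2]
    exact helper_neg (firstIdx_spec p hne) _
  
lemma change_at_first (p : ℕ → ℝ) (hne : ∃ j, p j ≠ 0) (h0 : p 0 = 0) :
    1 ≤ firstIdx p ∧ gfun p (firstIdx p - 1) * gfun p (firstIdx p) < 0 := by
  classical
  have hf := firstIdx_spec p hne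
  have h1 : 1 ≤ firstIdx p := by
    rcases Nat.eq_zero_or_pos (firstIdx p) with h | h
    · exact absurd (h ▸ hf) (by simp [h0])
    · exact h
  refine ⟨h1, ?_⟩
  obtain ⟨m, hm⟩ : ∃ m, firstIdx p = m + 1 := ⟨firstIdx p - 1, by omega⟩
  have hall : ∀ j ≤ m, p j = 0 := fun j hj => firstIdx_min p (by omega)
  have hp : ¬ p (prevIdx p m) ≠ 0 := by
    simp only [ne_eq, not_not]
    exact hall _ (prevIdx_le p m)
  have e1 : gfun p m = (-1:ℝ)^1 * p (firstIdx p) := by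
    unfold gfun
    rw [if_neg hp, show firstIdx p - m = 1 by omega]
  have e2 : gfun p (firstIdx p) = (-1:ℝ)^0 * p (firstIdx p) := by
    rw [gfun_eq p hf, pow_zero, one_mul]
  rw [show firstIdx p - 1 = m by omega, e1, e2]
  exact helper_neg hf 0

lemma N_le_signChanges (q : ℕ) (p : ℕ → ℝ) (hne : ∃ x, x ≤ q ∧ p x ≠ 0) :
    N q p ≤ signChanges q (gfun p) := by
  classical
  have hne' : ∃ j, p j ≠ 0 := ⟨hne.choose, hne.choose_spec.2⟩
  have hfq : firstIdx p ≤ q := le_trans (Nat.sInf_le hne.choose_spec.2) hne.choose_spec.1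
  set g := gfun p with hg
  set T := {ν : ℕ | 1 ≤ ν ∧ ν ≤ q ∧ g (ν - 1) * g ν < 0} with hT
  have hTfin : T.Finite := (Set.finite_Icc 1 q).subset (fun ν h => ⟨h.1, h.2.1⟩)
  have hmaps : Set.MapsTo (fun ν => if ν = 0 then firstIdx p else ν) {ν : ℕ | IsZero q p ν} T := by
    intro ν hν
    have hν' : IsZero q p ν := hν
    by_cases h0 : ν = 0
    · subst h0
      have hz : p 0 = 0 := by
        rcases hν' with ⟨_, h⟩ | ⟨h, _⟩
        · exact h
        · omega
      obtain ⟨hf1, hch⟩ := change_at_first p hne' hz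
      simp only [if_pos rfl, hT, Set.mem_setOf_eq]
      exact ⟨hf1, hfq, hch⟩
    · have hν1 : 1 ≤ ν := by omega
      simp only [if_neg h0, hT, Set.mem_setOf_eq]
      rcases hν' with ⟨hνq, hz⟩ | ⟨_, hνq, hsgn⟩
      · exact ⟨hν1, hνq, change_at_zero p hne' hν1 hz⟩
      · have ha : p (ν - 1) ≠ 0 := fun h => by simp [h] at hsgn
        have hb : p ν ≠ 0 := fun h => by simp [h] at hsgn
        refine ⟨hν1, hνq, ?_⟩
        rw [hg, gfun_eq p ha, gfun_eq p hb]
        exact hsgn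
  have hinj : Set.InjOn (fun ν => if ν = 0 then firstIdx p else ν) {ν : ℕ | IsZero q p ν} := by
    intro ν hν ν' hν' heq
    have hfz : ¬ IsZero q p (firstIdx p) := by
      rintro (⟨_, h⟩ | ⟨h1, _, h⟩)
      · exact firstIdx_spec p hne' h
      · rw [firstIdx_min p (by omega)] at h
        simp at h
    have hz1 : IsZero q p ν := hν
    have hz2 : IsZero q p ν' := hν'
    by_cases h0 : ν = 0 <;> by_cases h0' : ν' = 0
    · rw [h0, h0']
    · simp only [if_pos h0, if_neg h0'] at heq
      exact absurd (heq ▸ hz2) hfz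
    · simp only [if_neg h0, if_pos h0'] at heq
      exact absurd (heq ▸ hz1) hfz
    · simpa [if_neg h0, if_neg h0'] using heq
  exact Set.ncard_le_ncard_of_injOn _ hmaps hinj hTfin

lemma chain (q : ℕ) (g : ℕ → ℝ) (hg : ∀ ν, ν ≤ q → g ν ≠ 0) :
    ∀ r, r ≤ q → ∃ t : ℕ → ℕ,
      (∀ i, i < signChanges r g → t i < t (i+1) ∧ g (t i) * g (t (i+1)) < 0) ∧
      (∀ i, i ≤ signChanges r g → t i ≤ r) ∧
      0 < g (t (signChanges r g)) * g r := by
  intro r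
  induction r with
  | zero =>
    intro _
    have h0 : signChanges 0 g = 0 := by
      unfold signChanges
      convert Set.ncard_empty ℕ using 2
      ext ν; simp only [Set.mem_setOf_eq, Set.mem_empty_iff_false, iff_false]
      omega
    refine ⟨fun _ => 0, ?_, ?_, ?_⟩
    · intro i hi; rw [h0] at hi; omega
    · intro i _; exact le_refl 0
    · exact mul_self_pos.mpr (hg 0 (Nat.zero_le q))
  | succ r ih =>
    intro hr
    obtain ⟨t, hadj, hbnd, hlast⟩ := ih (by omega)
    set k := signChanges r g with hk
    have hSfin : {ν : ℕ | 1 ≤ ν ∧ ν ≤ r ∧ g (ν - 1) * g ν < 0}.Finite :=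
      (Set.finite_Icc 1 r).subset (fun ν h => ⟨h.1, h.2.1⟩)
    have hgr : g r ≠ 0 := hg r (by omega)
    have hgr1 : g (r+1) ≠ 0 := hg (r+1) hr
    by_cases hch : g r * g (r+1) < 0
    · have hkk : signChanges (r+1) g = k + 1 := by
        unfold signChanges
        have hset : {ν : ℕ | 1 ≤ ν ∧ ν ≤ r + 1 ∧ g (ν - 1) * g ν < 0}
            = insert (r+1) {ν : ℕ | 1 ≤ ν ∧ ν ≤ r ∧ g (ν - 1) * g ν < 0} := by
          ext ν
          simp only [Set.mem_setOf_eq, Set.mem_insert_iff]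
          constructor
          · rintro ⟨h1, h2, h3⟩
            rcases Nat.lt_succ_iff_lt_or_eq.mp (Nat.lt_succ_of_le h2) with h | h
            · right; exact ⟨h1, by omega, h3⟩
            · left; exact h
          · rintro (rfl | ⟨h1, h2, h3⟩)
            · exact ⟨by omega, le_refl _, by simpa using hch⟩
            · exact ⟨h1, by omega, h3⟩
        rw [hset, Set.ncard_insert_of_notMem (by simp only [Set.mem_setOf_eq]; omega) hSfin]
        rfl
      refine ⟨fun i => if i ≤ k then t i else r + 1, ?_, ?_, ?_⟩
      · intro i hi
        rw [hkk] at hi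
        rcases Nat.lt_succ_iff_lt_or_eq.mp (by omega : i < k + 1) with h | h
        · have := hadj i h
          simp only [if_pos (by omega : i ≤ k), if_pos (by omega : i + 1 ≤ k)]
          exact this
        · subst h
          simp only [if_pos (le_refl k), if_neg (by omega : ¬ k + 1 ≤ k)]
          constructor
          · exact lt_of_le_of_lt (hbnd k (le_refl k)) (by omega)
          · nlinarith [mul_pos hlast (neg_pos.mpr hch), sq_nonneg (g r), mul_self_pos.mpr hgr]
      · intro i hi
        show (if i ≤ k then t i else r + 1) ≤ r + 1
        split_ifs with h
        · exact le_trans (hbnd i h) (by omega)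
        · exact le_refl _
      · rw [hkk]
        simp only [if_neg (by omega : ¬ k + 1 ≤ k)]
        exact mul_self_pos.mpr hgr1
    · have hpos : 0 < g r * g (r+1) :=
        lt_of_le_of_ne (not_lt.mp hch) (Ne.symm (mul_ne_zero hgr hgr1))
      have hkk : signChanges (r+1) g = k := by
        unfold signChanges
        congr 1
        ext ν
        simp only [Set.mem_setOf_eq]
        constructor
        · rintro ⟨h1, h2, h3⟩
          rcases Nat.lt_succ_iff_lt_or_eq.mp (Nat.lt_succ_of_le h2) with h | h
          · exact ⟨h1, by omega, h3⟩
          · exfalso; subst h; simp only [Nat.add_sub_cancel] at h3; linarith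
        · rintro ⟨h1, h2, h3⟩
          exact ⟨h1, by omega, h3⟩
      refine ⟨t, ?_, ?_, ?_⟩
      · rw [hkk]; exact hadj
      · rw [hkk]; intro i hi; exact le_trans (hbnd i hi) (by omega)
      · rw [hkk]
        nlinarith [mul_pos hlast hpos, sq_nonneg (g r), mul_self_pos.mpr hgr]

lemma alt_chain (g : ℕ → ℝ) (t : ℕ → ℕ) (k : ℕ)
    (hadj : ∀ i, i < k → g (t i) * g (t (i+1)) < 0) (h0 : g (t 0) ≠ 0) :
    ∀ i, i ≤ k → 0 < (-1:ℝ)^i * (g (t 0) * g (t i)) := by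
  intro i
  induction i with
  | zero => intro _; simpa using mul_self_pos.mpr h0
  | succ i ih =>
    intro hi
    have h1 := ih (by omega)
    have h2 := hadj i (by omega)
    have h3 : g (t i) ≠ 0 := fun h => by simp [h] at h2
    rw [pow_succ]
    nlinarith [mul_pos h1 (neg_pos.mpr h2), mul_self_pos.mpr h3]



/-- Let `{φₖ}ₖ₌₁ⁿ ⊂ C[0,q]_ℤ` (linearly independent, `1 ≤ n ≤ q`) be a
`T₀`-system and let `p ∈ L_n` satisfy `N(p) = n`. Then there are integers
`0 ≤ ν₁ < ⋯ < ν_{n+1} ≤ q` such that whenever `Σ (-1)ⁱ ρᵢ p(νᵢ) = 0` for some positive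
`ρᵢ`, the polynomial `p` vanishes identically on `[0,q]_ℤ`. -/
theorem stmt_6 (q n : ℕ) (hn : 1 ≤ n) (hnq : n ≤ q)
    (φ : Fin n → ℕ → ℝ) (hli : LinIndepOn q n φ)
    (hT0 : ∀ b : Fin n → ℝ, b ≠ 0 → N0 q (poly n φ b) ≤ n - 1)
    (a : Fin n → ℝ) (hNa : N q (poly n φ a) = n) :
    ∃ ν : Fin (n + 1) → ℕ, StrictMono ν ∧ (∀ i, ν i ≤ q) ∧
      ∀ ρ : Fin (n + 1) → ℝ, (∀ i, 0 < ρ i) →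
        (∑ i : Fin (n + 1), (-1 : ℝ) ^ (i : ℕ) * ρ i * poly n φ a (ν i)) = 0 →
        ∀ μ ≤ q, poly n φ a μ = 0 := by
  classical
  set p := poly n φ a with hpdef
  have hex : ∃ x, x ≤ q ∧ p x ≠ 0 := by
    by_contra hc
    push_neg at hc
    have hset : {ν : ℕ | IsZero q p ν} = ↑(Finset.Iic q) := by
      ext ν
      simp only [Set.mem_setOf_eq, Finset.coe_Iic, Set.mem_Iic]
      constructor
      · rintro (⟨h, _⟩ | ⟨_, h, _⟩) <;> exact h
      · intro h; exact Or.inl ⟨h, hc ν h⟩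
    have hcard : N q p = q + 1 := by
      rw [N, hset, Set.ncard_coe_finset, Nat.card_Iic]
    omega
  have hne' : ∃ j, p j ≠ 0 := ⟨hex.choose, hex.choose_spec.2⟩
  have ha : a ≠ 0 := by
    rintro rfl
    obtain ⟨x, _, hx⟩ := hex
    exact hx (by simp [hpdef, poly])
  have hN0 : N0 q p ≤ n - 1 := hT0 a ha
  set g := gfun p with hgdef
  have hgne : ∀ ν, g ν ≠ 0 := gfun_ne_zero p hne'
  have hsc : n ≤ signChanges q g := hNa ▸ N_le_signChanges q p hex
  obtain ⟨t, hadj, hbnd, -⟩ := chain q g (fun ν _ => hgne ν) q le_rfl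
  set k := signChanges q g with hk
  have tmono : ∀ j i : ℕ, i < j → j ≤ k → t i < t j := by
    intro j
    induction j with
    | zero => intro i h _; omega
    | succ m ih =>
      intro i hij hjk
      rcases Nat.lt_succ_iff_lt_or_eq.mp hij with h | h
      · exact lt_trans (ih i h (by omega)) (hadj m (by omega)).1
      · subst h; exact (hadj _ (by omega)).1
  have hfin : ∀ i : Fin (n+1), (i : ℕ) ≤ k := fun i =>
    le_trans (Nat.lt_succ_iff.mp i.isLt) hsc
  refine ⟨fun i : Fin (n+1) => t i.val, ?_, ?_, ?_⟩
  · intro i j hij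
    exact tmono j.val i.val hij (hfin j)
  · intro i
    exact hbnd i.val (hfin i)
  · intro ρ hρ hsum
    exfalso
    have hsum' : (∑ i : Fin (n + 1), (-1 : ℝ) ^ (i : ℕ) * ρ i * p (t i.val)) = 0 := hsum
    have halt := alt_chain g t k (fun i hi => (hadj i hi).2) (hgne (t 0))
    have hnz : ∃ i : Fin (n+1), p (t i.val) ≠ 0 := by
      by_contra hc
      push_neg at hc
      have hinj2 : Function.Injective (fun i : Fin (n+1) => t i.val) := by
        intro i j hij
        by_contra hne2
        have hne3 : i ≠ j := fun h => hne2 h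
        rcases lt_or_gt_of_ne hne3 with h | h
        · exact absurd hij (ne_of_lt (tmono j.val i.val h (hfin j)))
        · exact absurd hij.symm (ne_of_lt (tmono i.val j.val h (hfin i)))
      have hsub : ↑(Finset.image (fun i : Fin (n+1) => t i.val) Finset.univ)
          ⊆ {ν : ℕ | ν ≤ q ∧ p ν = 0} := by
        intro x hx
        simp only [Finset.coe_image, Finset.coe_univ, Set.image_univ, Set.mem_range] at hx
        obtain ⟨i, rfl⟩ := hx
        exact ⟨hbnd i.val (hfin i), hc i⟩
      have hcard : (Finset.image (fun i : Fin (n+1) => t i.val) Finset.univ).card = n + 1 := by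
        rw [Finset.card_image_of_injective _ hinj2, Finset.card_univ, Fintype.card_fin]
      have hle : n + 1 ≤ N0 q p := by
        rw [N0]
        calc n + 1 = (Finset.image (fun i : Fin (n+1) => t i.val) Finset.univ).card := hcard.symm
          _ = (↑(Finset.image (fun i : Fin (n+1) => t i.val) Finset.univ) : Set ℕ).ncard :=
              (Set.ncard_coe_finset _).symm
          _ ≤ {ν : ℕ | ν ≤ q ∧ p ν = 0}.ncard :=
              Set.ncard_le_ncard hsub ((Set.finite_Iic q).subset (fun x hx => hx.1))
      omega
    obtain ⟨i₀, hi₀⟩ := hnz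
    have hposS : 0 < ∑ i : Fin (n+1), ((-1:ℝ)^(i:ℕ) * ρ i * p (t i.val)) * g (t 0) := by
      apply Finset.sum_pos'
      · intro i _
        by_cases hz : p (t i.val) = 0
        · simp [hz]
        · have hgeq : g (t i.val) = p (t i.val) := gfun_eq p hz
          have h2 := halt i.val (hfin i)
          rw [← hgeq]
          nlinarith [mul_pos (hρ i) h2]
      · refine ⟨i₀, Finset.mem_univ _, ?_⟩
        have hgeq : g (t i₀.val) = p (t i₀.val) := gfun_eq p hi₀
        have h2 := halt i₀.val (hfin i₀)
        rw [← hgeq]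
        nlinarith [mul_pos (hρ i₀) h2]
    rw [← Finset.sum_mul, hsum', zero_mul] at hposS
    exact lt_irrefl 0 hposS


end DiscPaper
end

section
/- Let ψ_k(ν) = P_ν(λ_k), k ∈ {1,…,q+1}, ν ∈ [0,q]_Z, be the eigenfunctions of the discrete Sturm–Liouville problem, where λ_{q+1} < ⋯ < λ_1 are the zeros of P̃_{q+1} = P_{q+1} − η P_q. Then for every k ∈ {1,…,q+1} we have S^−(ψ_k) = S^+(ψ_k) = N(ψ_k) = k − 1. -/
/-!
The polynomials `P_l` have simple real roots, and the roots of `P_l` strictly interlace those of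
`P_{l+1}`: at the roots of `P_{l+1}` the recurrence reads `β P_{l+2} = -γ P_l`, so `P_{l+2}`
alternates in sign there and the intermediate value theorem places its roots. Comparing the
signs of such an interlaced pair at a point `x` shows that the number of roots above `x` grows
from `P_l` to `P_{l+1}` exactly when `ν = l+1` is a zero of `ν ↦ P_ν(x)`; hence `N(ψ)` counts the
roots of `P_q` above `x` (Sturm's argument). Since `P̃_{q+1}` is the last term of the same
recurrence with `α_q` replaced by `α_q + β_q η`, the roots of `P_q` also interlace those of
`P̃_{q+1}`, so at `x = λ_k` there are as many roots of `P_q` above `x` as roots `λ_1, …, λ_{k-1}`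
of `P̃_{q+1}`. Finally `ψ_k(0) = 1`, `ψ_k(q) ≠ 0`, and by the recurrence every interior zero of
`ψ_k` lies between values of opposite signs, so every replacement of its zeros by nonzero
values has exactly `N(ψ_k)` sign changes.
-/

namespace DiscPaper

open Polynomial in
/-- STATEMENT SETUP: the polynomials `P_l` generated by the three-term recurrence
`γ_{l-1} P_{l-1} + α_l P_l + β_l P_{l+1} = λ ρ_l P_l` with `P_{-1} = 0`, `P_0 = 1`. -/
structure Recurrence (α β γ ρ : ℕ → ℝ) (P : ℕ → Polynomial ℝ) : Prop where
  hβ : ∀ l, 0 < β l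
  hγ : ∀ l, 0 < γ l
  hρ : ∀ l, 0 < ρ l
  hP0 : P 0 = 1
  hrec0 : C (α 0) * P 0 + C (β 0) * P 1 = X * (C (ρ 0) * P 0)
  hrec : ∀ l : ℕ,
    C (γ l) * P l + C (α (l + 1)) * P (l + 1) + C (β (l + 1)) * P (l + 2) =
      X * (C (ρ (l + 1)) * P (l + 1))

/-- STATEMENT SETUP: `Λ (k-1)` is the `k`-th zero `λ_k` of
`P̃_{q+1} = P_{q+1} - η P_q`, ordered decreasingly: `λ_{q+1} < ⋯ < λ_1`. -/
structure SLZeros (P : ℕ → Polynomial ℝ) (q : ℕ) (η : ℝ) (Λ : ℕ → ℝ) : Prop where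
  anti : StrictAntiOn Λ (Set.Iic q)
  root : ∀ i ≤ q, (P (q + 1) - Polynomial.C η * P q).eval (Λ i) = 0

open Finset Polynomial Filter

lemma ncard_setOf_le_and (p : ℕ → Prop) [DecidablePred p] (q : ℕ) :
    {ν | ν ≤ q ∧ p ν}.ncard = Nat.count p (q + 1) := by
  rw [Nat.count_eq_card_filter_range, ← Set.ncard_coe_finset]
  congr 1
  ext ν
  simp

def IsZeroAt (f : ℕ → ℝ) (ν : ℕ) : Prop := f ν = 0 ∨ (1 ≤ ν ∧ f (ν - 1) * f ν < 0)

def IsSignChangeAt (g : ℕ → ℝ) (ν : ℕ) : Prop := 1 ≤ ν ∧ g (ν - 1) * g ν < 0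

open scoped Classical in
lemma N_eq_count (q : ℕ) (f : ℕ → ℝ) : N q f = Nat.count (IsZeroAt f) (q + 1) := by
  rw [N, ← ncard_setOf_le_and]
  congr 1
  ext ν
  simp only [IsZero, IsZeroAt, Set.mem_ofPred_eq]
  tauto

open scoped Classical in
lemma signChanges_eq_count (q : ℕ) (g : ℕ → ℝ) :
    signChanges q g = Nat.count (IsSignChangeAt g) (q + 1) := by
  rw [signChanges, ← ncard_setOf_le_and]
  congr 1
  ext ν
  simp only [IsSignChangeAt, Set.mem_ofPred_eq]
  tauto

lemma N_zero (f : ℕ → ℝ) : N 0 f = if f 0 = 0 then 1 else 0 := by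
  classical
  simp [N_eq_count, Nat.count_one, IsZeroAt]

lemma N_succ (q : ℕ) (f : ℕ → ℝ) :
    N (q + 1) f = N q f + if f (q + 1) = 0 ∨ f q * f (q + 1) < 0 then 1 else 0 := by
  classical
  simp [N_eq_count q, N_eq_count (q + 1), Nat.count_succ _ (q + 1), IsZeroAt]

lemma signChanges_zero (g : ℕ → ℝ) : signChanges 0 g = 0 := by
  classical
  simp [signChanges_eq_count, Nat.count_one, IsSignChangeAt]

lemma signChanges_succ (q : ℕ) (g : ℕ → ℝ) :
    signChanges (q + 1) g = signChanges q g + if g q * g (q + 1) < 0 then 1 else 0 := by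
  classical
  simp [signChanges_eq_count q, signChanges_eq_count (q + 1), Nat.count_succ _ (q + 1),
    IsSignChangeAt]

lemma exists_admissible (q : ℕ) (f : ℕ → ℝ) : ∃ g, Admissible q f g := by
  classical
  refine ⟨fun ν => if f ν = 0 then 1 else f ν, fun ν _ => ?_, fun ν _ hν => if_neg hν⟩
  dsimp only
  split_ifs with h <;> simp [h]

/-- Replacing a zero between two values of opposite signs by any nonzero value produces
exactly one sign change. -/
lemma ite_mul_neg_add_ite_mul_neg {a b c : ℝ} (hac : a * c < 0) (hb : b ≠ 0) :
    ((if a * b < 0 then 1 else 0) + if b * c < 0 then 1 else 0 : ℕ) = 1 := by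
  rcases hb.lt_or_gt with hb | hb <;> rcases mul_neg_iff.1 hac with ⟨ha, hc⟩ | ⟨ha, hc⟩ <;>
    simp [mul_neg_iff, ha, hc, hb, ha.le, hc.le, hb.le, not_lt.2]

lemma signChanges_eq_N {q : ℕ} {f g : ℕ → ℝ} (h0 : f 0 ≠ 0) (hq : f q ≠ 0)
    (hzero : ∀ ν, ν + 2 ≤ q → f (ν + 1) = 0 → f ν * f (ν + 2) < 0) (hg : Admissible q f g) :
    signChanges q g = N q f := by
  classical
  suffices ∀ l ≤ q, f l ≠ 0 → signChanges l g = N l f from this q le_rfl hq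
  intro l
  induction l using Nat.strong_induction_on with
  | _ l ih =>
    intro hlq hl
    match l with
    | 0 => simp [signChanges_zero, N_zero, h0]
    | l + 1 =>
      by_cases hfl : f l = 0
      · obtain ⟨m, rfl⟩ : ∃ m, l = m + 1 :=
          Nat.exists_eq_succ_of_ne_zero (by rintro rfl; exact h0 hfl)
        have hsign : f m * f (m + 1 + 1) < 0 := hzero m hlq hfl
        have hm : f m ≠ 0 := by rintro h; simp [h] at hsign
        have hgm : g m = f m := hg.2 m (by omega) hm
        have hgm2 : g (m + 1 + 1) = f (m + 1 + 1) := hg.2 (m + 1 + 1) hlq hl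
        have hone := ite_mul_neg_add_ite_mul_neg (b := g (m + 1)) (hgm ▸ hgm2 ▸ hsign)
          (hg.1 (m + 1) (by omega))
        have hz : (if f (m + 1 + 1) = 0 ∨ f (m + 1) * f (m + 1 + 1) < 0 then 1 else 0) = 0 :=
          if_neg (by simp [hfl, hl])
        rw [signChanges_succ, signChanges_succ, N_succ, N_succ, ih m (by omega) (by omega) hm,
          if_pos (Or.inl hfl), hz]
        omega
      · rw [signChanges_succ, N_succ, ih l (by omega) (by omega) hfl, hg.2 l (by omega) hfl,
          hg.2 (l + 1) hlq hl]
        simp [hl]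

lemma Sminus_eq_N_and_Splus_eq_N {q : ℕ} {f : ℕ → ℝ}
    (h : ∀ g, Admissible q f g → signChanges q g = N q f) :
    Sminus q f = N q f ∧ Splus q f = N q f := by
  have hset : {s | ∃ g, Admissible q f g ∧ signChanges q g = s} = {N q f} := by
    ext s
    constructor
    · rintro ⟨g, hg, rfl⟩
      exact h g hg
    · rintro rfl
      obtain ⟨g, hg⟩ := exists_admissible q f
      exact ⟨g, hg, h g hg⟩
  rw [Sminus, Splus, hset, csInf_singleton, csSup_singleton]
  exact ⟨rfl, rfl⟩

noncomputable def countAbove (n : ℕ) (t : ℕ → ℝ) (x : ℝ) : ℕ := #{i ∈ range n | x < t i}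

lemma countAbove_le (n : ℕ) (t : ℕ → ℝ) (x : ℝ) : countAbove n t x ≤ n :=
  (card_filter_le _ _).trans (card_range n).le

lemma countAbove_eq_of_forall {n m : ℕ} {t : ℕ → ℝ} {x : ℝ} (hm : m ≤ n)
    (h : ∀ j < n, x < t j ↔ j < m) : countAbove n t x = m := by
  rw [countAbove, ← card_range m]
  congr 1
  ext j
  simp only [mem_filter, mem_range]
  constructor
  · rintro ⟨hj, hx⟩
    exact (h j hj).1 hx
  · intro hj
    exact ⟨by omega, (h j (by omega)).2 hj⟩

section Above

variable {n : ℕ} {t : ℕ → ℝ} (ht : StrictAntiOn t (Set.Iio n))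
include ht

lemma lt_countAbove_iff (x : ℝ) {i : ℕ} (hi : i < n) : i < countAbove n t x ↔ x < t i := by
  constructor
  · intro h
    by_contra hx
    have hsub : {j ∈ range n | x < t j} ⊆ range i := fun j hj => by
      simp only [mem_filter, mem_range] at hj ⊢
      by_contra hji
      rcases (not_lt.1 hji).eq_or_lt with rfl | hij
      · exact hx hj.2
      · exact hx (hj.2.trans (ht hi hj.1 hij))
    have := card_le_card hsub
    simp only [card_range] at this
    exact absurd h (not_lt.2 this)
  · intro hx
    have hsub : range (i + 1) ⊆ {j ∈ range n | x < t j} := fun j hj => by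
      simp only [mem_filter, mem_range] at hj ⊢
      refine ⟨by omega, ?_⟩
      rcases (Nat.lt_succ_iff.1 hj).eq_or_lt with rfl | hji
      · exact hx
      · exact hx.trans (ht (hji.trans hi) hi hji)
    simpa [countAbove] using card_le_card hsub

lemma countAbove_apply {j : ℕ} (hj : j < n) : countAbove n t (t j) = j :=
  countAbove_eq_of_forall hj.le fun i hi => ⟨fun h => by
    by_contra hji
    rcases (not_lt.1 hji).eq_or_lt with rfl | hij
    · exact lt_irrefl _ h
    · exact lt_asymm h (ht hj hi hij), fun hij => ht (hij.trans hj) hj hij⟩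

end Above
/-- `p` has degree `n`, positive leading coefficient, and the `n` simple real roots
`t 0 > t 1 > ⋯ > t (n-1)`. -/
structure SimpleRoots (p : ℝ[X]) (n : ℕ) (t : ℕ → ℝ) : Prop where
  anti : StrictAntiOn t (Set.Iio n)
  leadingCoeff_pos : 0 < p.leadingCoeff
  natDegree_eq : p.natDegree = n
  isRoot : ∀ i < n, p.IsRoot (t i)

namespace SimpleRoots

variable {p : ℝ[X]} {n : ℕ} {t : ℕ → ℝ} (h : SimpleRoots p n t)
include h

lemma ne_zero : p ≠ 0 := leadingCoeff_ne_zero.1 h.leadingCoeff_pos.ne'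

lemma roots_eq : p.roots = (range n).val.map t := by
  have hnodup : ((range n).val.map t).Nodup :=
    (range n).nodup.map_on fun i hi j hj => h.anti.injOn (by simpa using hi) (by simpa using hj)
  refine (Multiset.eq_of_le_of_card_le
    ((Multiset.le_iff_subset hnodup).2 fun y hy => ?_) ?_).symm
  · obtain ⟨i, hi, rfl⟩ := Multiset.mem_map.1 hy
    exact (mem_roots h.ne_zero).2 (h.isRoot i (by simpa using hi))
  · simpa [h.natDegree_eq] using card_roots' p

lemma eval_eq (x : ℝ) : p.eval x = p.leadingCoeff * ∏ i ∈ range n, (x - t i) := by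
  have hcard : Multiset.card p.roots = p.natDegree := by simp [h.roots_eq, h.natDegree_eq]
  conv_lhs => rw [← C_leadingCoeff_mul_prod_multiset_X_sub_C hcard]
  simp [h.roots_eq, eval_multiset_prod, Finset.prod_eq_multiset_prod]

lemma eval_eq_zero_iff {x : ℝ} : p.eval x = 0 ↔ ∃ i < n, t i = x := by
  rw [← IsRoot.def, ← mem_roots h.ne_zero, h.roots_eq]
  simp

lemma neg_one_pow_countAbove_mul_eval_pos {x : ℝ} (hx : p.eval x ≠ 0) :
    0 < (-1) ^ countAbove n t x * p.eval x := by
  have hsign : ((-1) ^ countAbove n t x : ℝ) = ∏ i ∈ range n, if x < t i then -1 else 1 := by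
    rw [← prod_filter, prod_const, countAbove]
  rw [hsign, h.eval_eq, mul_left_comm, ← prod_mul_distrib]
  refine mul_pos h.leadingCoeff_pos (prod_pos fun i hi => ?_)
  have hne : x ≠ t i := fun he => hx (h.eval_eq_zero_iff.2 ⟨i, by simpa using hi, he.symm⟩)
  split_ifs with hlt
  · linarith
  · simpa using lt_of_le_of_ne (not_lt.1 hlt) hne.symm

end SimpleRoots

noncomputable def numRootsAbove (p : ℝ[X]) (x : ℝ) : ℕ := p.roots.countP (x < ·)

lemma SimpleRoots.numRootsAbove_eq {p : ℝ[X]} {n : ℕ} {t : ℕ → ℝ} (h : SimpleRoots p n t) (x : ℝ) :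
    numRootsAbove p x = countAbove n t x := by
  rw [numRootsAbove, h.roots_eq, Multiset.countP_map]
  rfl

def Interlaced (a b : ℝ[X]) (n : ℕ) : Prop :=
  ∃ r s, SimpleRoots a n r ∧ SimpleRoots b (n + 1) s ∧ ∀ i < n, s (i + 1) < r i ∧ r i < s i

lemma countAbove_apply_right {n : ℕ} {r s : ℕ → ℝ} (hs : StrictAntiOn s (Set.Iio (n + 1)))
    (hrs : ∀ i < n, s (i + 1) < r i ∧ r i < s i) {i : ℕ} (hi : i ≤ n) :
    countAbove n r (s i) = i := by
  refine countAbove_eq_of_forall hi fun j hj => ⟨fun h => ?_, fun h => ?_⟩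
  · by_contra! hij
    exact lt_asymm h
      ((hrs j hj).2.trans_le (hs.antitoneOn (by simp; omega) (by simp; omega) hij))
  · exact (hs.antitoneOn (by simp; omega) (by simp; omega) h).trans_lt (hrs j hj).1

section Interlacing

variable {a b : ℝ[X]} {n : ℕ} {r s : ℕ → ℝ} (hr : SimpleRoots a n r)
  (hs : SimpleRoots b (n + 1) s) (hrs : ∀ i < n, s (i + 1) < r i ∧ r i < s i)
include hr hs hrs

lemma countAbove_le_countAbove_succ (x : ℝ) : countAbove n r x ≤ countAbove (n + 1) s x := by
  rcases Nat.eq_zero_or_pos (countAbove n r x) with h | h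
  · omega
  have hlt : countAbove n r x - 1 < n := by have := countAbove_le n r x; omega
  have hx := (lt_countAbove_iff hr.anti x hlt).1 (by omega)
  have := (lt_countAbove_iff hs.anti x (by omega : countAbove n r x - 1 < n + 1)).2
    (hx.trans (hrs _ hlt).2)
  omega

lemma countAbove_succ_le_countAbove_add_one (x : ℝ) :
    countAbove (n + 1) s x ≤ countAbove n r x + 1 := by
  by_contra! h
  have hlt : countAbove n r x < n := by have := countAbove_le (n + 1) s x; omega
  have hx := (lt_countAbove_iff hs.anti x (by omega : countAbove n r x + 1 < n + 1)).1 h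
  have := (lt_countAbove_iff hr.anti x hlt).2 (hx.trans (hrs _ hlt).1)
  omega

lemma eval_apply_right_ne_zero {i : ℕ} (hi : i ≤ n) : a.eval (s i) ≠ 0 := by
  rintro h0
  obtain ⟨j, hj, hji⟩ := hr.eval_eq_zero_iff.1 h0
  have : j = i := by rw [← countAbove_apply hr.anti hj, hji, countAbove_apply_right hs.anti hrs hi]
  subst this
  exact (hrs j hj).2.ne hji

lemma countAbove_succ_eq (x : ℝ) :
    countAbove (n + 1) s x =
      countAbove n r x + if a.eval x = 0 ∨ a.eval x * b.eval x < 0 then 1 else 0 := by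
  have hle := countAbove_le_countAbove_succ hr hs hrs x
  have hle' := countAbove_succ_le_countAbove_add_one hr hs hrs x
  by_cases ha : a.eval x = 0
  · obtain ⟨j, hj, rfl⟩ := hr.eval_eq_zero_iff.1 ha
    have := (lt_countAbove_iff hs.anti (r j) (by omega : j < n + 1)).2 (hrs j hj).2
    rw [if_pos (Or.inl ha), countAbove_apply hr.anti hj] at *
    omega
  by_cases hb : b.eval x = 0
  · obtain ⟨j, hj, rfl⟩ := hs.eval_eq_zero_iff.1 hb
    rw [if_neg (by simp [ha, hb]), countAbove_apply hs.anti hj,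
      countAbove_apply_right hs.anti hrs (by omega), add_zero]
  have hprod : 0 < (-1) ^ (countAbove n r x + countAbove (n + 1) s x) * (a.eval x * b.eval x) := by
    have := mul_pos (hr.neg_one_pow_countAbove_mul_eval_pos ha)
      (hs.neg_one_pow_countAbove_mul_eval_pos hb)
    rwa [mul_mul_mul_comm, ← pow_add] at this
  rcases hle.eq_or_lt with h | h
  · rw [← h, (Even.add_self _).neg_one_pow, one_mul] at hprod
    rw [if_neg (by simp [ha, hprod.le]), ← h, add_zero]
  · have h' : countAbove (n + 1) s x = countAbove n r x + 1 := by omega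
    rw [h', Odd.neg_one_pow ⟨countAbove n r x, by ring⟩, neg_one_mul, neg_pos] at hprod
    rw [if_pos (Or.inr hprod), h']

end Interlacing

namespace Interlaced

variable {a b : ℝ[X]} {n : ℕ} (h : Interlaced a b n)
include h

lemma numRootsAbove_eq (x : ℝ) :
    numRootsAbove b x =
      numRootsAbove a x + if a.eval x = 0 ∨ a.eval x * b.eval x < 0 then 1 else 0 := by
  obtain ⟨r, s, hr, hs, hrs⟩ := h
  rw [hr.numRootsAbove_eq, hs.numRootsAbove_eq, countAbove_succ_eq hr hs hrs]

lemma eval_ne_zero_of_eval_eq_zero {x : ℝ} (hx : b.eval x = 0) : a.eval x ≠ 0 := by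
  obtain ⟨r, s, hr, hs, hrs⟩ := h
  obtain ⟨i, hi, rfl⟩ := hs.eval_eq_zero_iff.1 hx
  exact eval_apply_right_ne_zero hr hs hrs (by omega)

lemma natDegree_right : b.natDegree = n + 1 := by
  obtain ⟨r, s, hr, hs, hrs⟩ := h
  exact hs.natDegree_eq

lemma leadingCoeff_right_pos : 0 < b.leadingCoeff := by
  obtain ⟨r, s, hr, hs, hrs⟩ := h
  exact hs.leadingCoeff_pos

end Interlaced

lemma strictAntiOn_Iio_of_succ_lt {n : ℕ} {t : ℕ → ℝ} (h : ∀ i, i + 1 < n → t (i + 1) < t i) :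
    StrictAntiOn t (Set.Iio n) :=
  strictAntiOn_of_succ_lt Set.ordConnected_Iio fun i _ _ hi => by
    simpa using h i (by simpa using hi)

lemma exists_roots_of_alternating {p : ℝ[X]} {u : ℕ → ℝ} {m : ℕ}
    (hu : ∀ j < m, u (j + 1) < u j) (hsign : ∀ j ≤ m, 0 < (-1) ^ j * p.eval (u j)) :
    ∃ t : ℕ → ℝ, ∀ j < m, u (j + 1) < t j ∧ t j < u j ∧ p.IsRoot (t j) := by
  have (j : ℕ) : ∃ y, j < m → u (j + 1) < y ∧ y < u j ∧ p.IsRoot y := by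
    by_cases hj : j < m
    · have hcont : ContinuousOn (fun y => (-1) ^ j * p.eval y) (Set.Icc (u (j + 1)) (u j)) :=
        (continuous_const.mul p.continuous).continuousOn
      have hlow : (-1) ^ j * p.eval (u (j + 1)) < 0 := by
        have := hsign (j + 1) hj
        rw [pow_succ] at this
        linarith
      obtain ⟨y, hy, hy0⟩ := intermediate_value_Ioo (hu j hj).le hcont ⟨hlow, hsign j hj.le⟩
      refine ⟨y, fun _ => ⟨hy.1, hy.2, ?_⟩⟩
      simpa using hy0
    · exact ⟨0, fun h => absurd h hj⟩
  choose t ht using this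
  exact ⟨t, ht⟩

lemma eventually_atTop_eval_pos {p : ℝ[X]} (hd : 0 < p.natDegree) (hlc : 0 < p.leadingCoeff) :
    ∀ᶠ x in atTop, 0 < p.eval x :=
  (p.tendsto_atTop_of_leadingCoeff_nonneg (natDegree_pos_iff_degree_pos.1 hd)
    hlc.le).eventually_gt_atTop 0

lemma eventually_atBot_neg_one_pow_mul_eval_pos {p : ℝ[X]} (hd : 0 < p.natDegree)
    (hlc : 0 < p.leadingCoeff) : ∀ᶠ x in atBot, 0 < (-1) ^ p.natDegree * p.eval x := by
  set q : ℝ[X] := C ((-1) ^ p.natDegree) * p.comp (-X)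
  have hqd : q.natDegree = p.natDegree := by
    rw [natDegree_C_mul (pow_ne_zero _ (by norm_num)), natDegree_comp]
    simp
  have hqlc : q.leadingCoeff = p.leadingCoeff := by
    simp only [q, leadingCoeff_mul, leadingCoeff_C,
      leadingCoeff_comp (by simp : (-X : ℝ[X]).natDegree ≠ 0)]
    rw [mul_left_comm, ← mul_pow]
    simp
  have := tendsto_neg_atBot_atTop.eventually (eventually_atTop_eval_pos (hqd ▸ hd) (hqlc ▸ hlc))
  simpa [q] using this

lemma natDegree_eq_and_leadingCoeff_pos_of_eq {a b c : ℝ[X]} {α β γ ρ : ℝ} {d : ℕ} (hβ : 0 < β)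
    (hρ : 0 < ρ) (hb : b.natDegree = d) (hlc : 0 < b.leadingCoeff) (ha : a.natDegree ≤ d)
    (h : C β * c = (C ρ * X - C α) * b - C γ * a) : c.natDegree = d + 1 ∧ 0 < c.leadingCoeff := by
  have hb0 : b ≠ 0 := leadingCoeff_ne_zero.1 hlc.ne'
  have hlin : (C ρ * X - C α).natDegree = 1 ∧ (C ρ * X - C α).leadingCoeff = ρ := by
    rw [sub_eq_add_neg, ← C_neg]
    exact ⟨natDegree_linear hρ.ne', leadingCoeff_linear hρ.ne'⟩
  have hlin0 : C ρ * X - C α ≠ 0 := fun h0 => by simp [h0] at hlin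
  have hdA : ((C ρ * X - C α) * b).natDegree = d + 1 := by
    rw [natDegree_mul hlin0 hb0, hlin.1, hb, add_comm]
  have hlt : (C γ * a).natDegree < ((C ρ * X - C α) * b).natDegree :=
    (natDegree_C_mul_le _ _).trans_lt (by omega)
  have hdc : (C β * c).natDegree = d + 1 := by
    rw [h, natDegree_sub_eq_left_of_natDegree_lt hlt, hdA]
  have hlcc : β * c.leadingCoeff = ρ * b.leadingCoeff := by
    rw [← leadingCoeff_C β, ← leadingCoeff_mul, h,
      leadingCoeff_sub_of_degree_lt (degree_lt_degree hlt), leadingCoeff_mul, hlin.2]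
  refine ⟨by rwa [natDegree_C_mul hβ.ne'] at hdc, ?_⟩
  nlinarith [mul_pos hρ hlc]

/-- A polynomial of degree `m + 1` that alternates in sign on `s 0 > ⋯ > s (m-1)` has a root
above `s 0`, one in each gap `(s i, s (i-1))` and one below `s (m-1)`. -/
lemma exists_simpleRoots_interlacing {c : ℝ[X]} {m : ℕ} {s : ℕ → ℝ}
    (hs : StrictAntiOn s (Set.Iio m)) (hdeg : c.natDegree = m + 1) (hlc : 0 < c.leadingCoeff)
    (hsign : ∀ i < m, 0 < (-1) ^ (i + 1) * c.eval (s i)) :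
    ∃ t, SimpleRoots c (m + 1) t ∧ ∀ i < m, t (i + 1) < s i ∧ s i < t i := by
  obtain ⟨M, hMc, hMs⟩ :=
    ((eventually_atTop_eval_pos (by omega) hlc).and (eventually_gt_atTop (s 0))).exists
  obtain ⟨M', hM'c, hM's, hM'M⟩ := ((eventually_atBot_neg_one_pow_mul_eval_pos (by omega) hlc).and
    ((eventually_lt_atBot (s (m - 1))).and (eventually_lt_atBot M))).exists
  -- the alternation points `M > s 0 > ⋯ > s (m-1) > M'`
  set u : ℕ → ℝ := fun j => if j = 0 then M else if j ≤ m then s (j - 1) else M' with hu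
  have hudec : ∀ j < m + 1, u (j + 1) < u j := by
    intro j hj
    rcases Nat.eq_zero_or_pos j with rfl | hj0
    · by_cases hm : 1 ≤ m <;> simp [hu, hm, hMs, hM'M]
    by_cases hjm : j + 1 ≤ m
    · simp only [hu, if_neg (by omega : j + 1 ≠ 0), if_neg (by omega : j ≠ 0), if_pos hjm,
        if_pos (by omega : j ≤ m), Nat.add_sub_cancel]
      exact hs (by simp; omega) (by simp; omega) (by omega)
    · simp only [hu, if_neg (by omega : j + 1 ≠ 0), if_neg (by omega : j ≠ 0), if_neg hjm,
        if_pos (by omega : j ≤ m)]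
      rwa [show j - 1 = m - 1 by omega]
  have husign : ∀ j ≤ m + 1, 0 < (-1) ^ j * c.eval (u j) := by
    intro j hj
    rcases Nat.eq_zero_or_pos j with rfl | hj0
    · simpa [hu] using hMc
    by_cases hjm : j ≤ m
    · simp only [hu, if_neg (by omega : j ≠ 0), if_pos hjm]
      simpa [show j - 1 + 1 = j by omega] using hsign (j - 1) (by omega)
    · simp only [hu, if_neg (by omega : j ≠ 0), if_neg hjm]
      rwa [show j = m + 1 by omega, ← hdeg]
  obtain ⟨t, ht⟩ := exists_roots_of_alternating hudec husign
  have hus : ∀ i < m, u (i + 1) = s i := fun i hi => by simp [hu, show i + 1 ≤ m by omega]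
  have hanti : StrictAntiOn t (Set.Iio (m + 1)) := strictAntiOn_Iio_of_succ_lt fun i hi =>
    (ht (i + 1) hi).2.1.trans (ht i (by omega)).1
  refine ⟨t, ⟨hanti, hlc, hdeg, fun i hi => (ht i hi).2.2⟩, fun i hi => ?_⟩
  rw [← hus i hi]
  exact ⟨(ht (i + 1) (by omega)).2.1, (ht i (by omega)).1⟩

lemma Interlaced.step {a b c : ℝ[X]} {n : ℕ} {α β γ ρ : ℝ} (h : Interlaced a b n) (hβ : 0 < β)
    (hγ : 0 < γ) (hρ : 0 < ρ) (hc : C β * c = (C ρ * X - C α) * b - C γ * a) :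
    Interlaced b c (n + 1) := by
  obtain ⟨r, s, hr, hs, hrs⟩ := h
  obtain ⟨hdeg, hlc⟩ := natDegree_eq_and_leadingCoeff_pos_of_eq hβ hρ hs.natDegree_eq
    hs.leadingCoeff_pos (by rw [hr.natDegree_eq]; omega) hc
  -- at a root of `b`, the relation gives `β c = -γ a`, and `a` has sign `(-1) ^ i` at `s i`
  have hsign : ∀ i < n + 1, 0 < (-1) ^ (i + 1) * c.eval (s i) := by
    intro i hi
    have hrel := congrArg (eval (s i)) hc
    simp only [eval_mul, eval_sub, eval_C, eval_X, (hs.isRoot i hi).eq_zero, mul_zero,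
      zero_sub] at hrel
    have ha := hr.neg_one_pow_countAbove_mul_eval_pos
      (eval_apply_right_ne_zero hr hs hrs (i := i) (by omega))
    rw [countAbove_apply_right hs.anti hrs (i := i) (by omega)] at ha
    have : 0 < β * ((-1) ^ (i + 1) * c.eval (s i)) := by
      rw [pow_succ, mul_left_comm, mul_assoc, hrel]
      nlinarith
    exact pos_of_mul_pos_right this hβ.le
  obtain ⟨t, ht, hst⟩ := exists_simpleRoots_interlacing hs.anti hdeg hlc hsign
  exact ⟨s, t, hs, ht, hst⟩

lemma interlaced_one {b : ℝ[X]} {α β ρ : ℝ} (hβ : 0 < β) (hρ : 0 < ρ)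
    (hb : C β * b = C ρ * X - C α) : Interlaced 1 b 0 := by
  obtain ⟨hdeg, hlc⟩ := natDegree_eq_and_leadingCoeff_pos_of_eq (γ := 0) (a := 0) hβ hρ
    natDegree_one (by simp) (by simp) (by simpa using hb)
  have hanti : StrictAntiOn (fun _ : ℕ => (0 : ℝ)) (Set.Iio 0) := fun _ hi => absurd hi (by simp)
  obtain ⟨s, hs, -⟩ := exists_simpleRoots_interlacing hanti hdeg hlc (by simp)
  exact ⟨fun _ => 0, s, ⟨hanti, by simp, natDegree_one, by simp⟩, hs, by simp⟩

namespace Recurrence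

variable {α β γ ρ : ℕ → ℝ} {P : ℕ → ℝ[X]} (hP : Recurrence α β γ ρ P)
include hP

lemma C_beta_mul_one : C (β 0) * P 1 = C (ρ 0) * X - C (α 0) := by
  have h := hP.hrec0
  rw [hP.hP0] at h
  linear_combination h

lemma C_beta_mul_add_two (l : ℕ) :
    C (β (l + 1)) * P (l + 2) =
      (C (ρ (l + 1)) * X - C (α (l + 1))) * P (l + 1) - C (γ l) * P l := by
  linear_combination hP.hrec l

lemma interlaced (l : ℕ) : Interlaced (P l) (P (l + 1)) l := by
  induction l with
  | zero => simpa [hP.hP0] using interlaced_one (hP.hβ 0) (hP.hρ 0) hP.C_beta_mul_one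
  | succ l ih => exact ih.step (hP.hβ _) (hP.hγ _) (hP.hρ _) (hP.C_beta_mul_add_two l)

/-- `P (q+1) - η P q` is the last term of the recurrence with `α q` replaced by `α q + β q η`. -/
lemma interlaced_sub_C_mul (q : ℕ) (η : ℝ) : Interlaced (P q) (P (q + 1) - C η * P q) q := by
  cases q with
  | zero =>
    have h := interlaced_one (α := α 0 + β 0 * η) (b := P 1 - C η * P 0) (hP.hβ 0) (hP.hρ 0)
      (by rw [hP.hP0, C_add, C_mul]; linear_combination hP.C_beta_mul_one)
    simpa [hP.hP0] using h
  | succ l =>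
    exact (hP.interlaced l).step (α := α (l + 1) + β (l + 1) * η) (hP.hβ _) (hP.hγ _) (hP.hρ _)
      (by rw [C_add, C_mul]; linear_combination hP.C_beta_mul_add_two l)

lemma N_eval (x : ℝ) (l : ℕ) :
    N l (fun ν => (P ν).eval x) = numRootsAbove (P l) x + if (P l).eval x = 0 then 1 else 0 := by
  induction l with
  | zero => simp [N_zero, hP.hP0, numRootsAbove]
  | succ l ih =>
    have hint := hP.interlaced l
    have hne := hint.eval_ne_zero_of_eval_eq_zero (x := x)
    rw [N_succ, ih, hint.numRootsAbove_eq x]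
    by_cases hb : (P (l + 1)).eval x = 0
    · simp [hb, hne hb]
    · by_cases ha : (P l).eval x = 0 <;> simp [ha, hb]

lemma eval_mul_eval_neg {x : ℝ} {ν : ℕ} (h : (P (ν + 1)).eval x = 0) :
    (P ν).eval x * (P (ν + 2)).eval x < 0 := by
  have hν := (hP.interlaced ν).eval_ne_zero_of_eval_eq_zero h
  have hrel := congrArg (eval x) (hP.C_beta_mul_add_two ν)
  simp only [eval_mul, eval_sub, eval_C, eval_X, h, mul_zero, zero_sub] at hrel
  have : β (ν + 1) * ((P ν).eval x * (P (ν + 2)).eval x) = -(γ ν * (P ν).eval x ^ 2) := by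
    linear_combination (P ν).eval x * hrel
  nlinarith [hP.hβ (ν + 1), mul_pos (hP.hγ ν) (sq_pos_of_ne_zero hν)]

end Recurrence

/-- for the eigenfunctions `ψ_k(ν) = P_ν(λ_k)` of the discrete
Sturm–Liouville problem (`k = 1,…,q+1`, `ν ∈ [0,q]_ℤ`),
`S⁻(ψ_k) = S⁺(ψ_k) = N(ψ_k) = k - 1`. -/
theorem stmt_8 (α β γ ρ : ℕ → ℝ) (P : ℕ → Polynomial ℝ)
    (hP : Recurrence α β γ ρ P)
    (q : ℕ) (η : ℝ) (Λ : ℕ → ℝ) (hΛ : SLZeros P q η Λ) :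
    ∀ k, 1 ≤ k → k ≤ q + 1 →
      Sminus q (fun ν => (P ν).eval (Λ (k - 1))) = k - 1 ∧
      Splus q (fun ν => (P ν).eval (Λ (k - 1))) = k - 1 ∧
      N q (fun ν => (P ν).eval (Λ (k - 1))) = k - 1 := by
  intro k hk1 hk2
  have hint := hP.interlaced_sub_C_mul q η
  have hroots : SimpleRoots (P (q + 1) - C η * P q) (q + 1) Λ :=
    ⟨fun i hi j hj hij => hΛ.anti (Nat.lt_succ_iff.1 hi) (Nat.lt_succ_iff.1 hj) hij,
      hint.leadingCoeff_right_pos, hint.natDegree_right, fun i hi => hΛ.root i (by omega)⟩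
  have hx := hΛ.root (k - 1) (by omega)
  have hPq := hint.eval_ne_zero_of_eval_eq_zero hx
  have hN : N q (fun ν => (P ν).eval (Λ (k - 1))) = k - 1 := by
    have := hint.numRootsAbove_eq (Λ (k - 1))
    rw [hroots.numRootsAbove_eq, countAbove_apply hroots.anti (by omega), hx, mul_zero,
      if_neg (by simp [hPq])] at this
    rw [hP.N_eval, if_neg hPq, ← this]
  obtain ⟨hSminus, hSplus⟩ := Sminus_eq_N_and_Splus_eq_N fun g hg =>
    signChanges_eq_N (f := fun ν => (P ν).eval (Λ (k - 1))) (by simp [hP.hP0]) hPq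
      (fun ν _ => hP.eval_mul_eval_neg) hg
  exact ⟨hSminus.trans hN, hSplus.trans hN, hN⟩

end DiscPaper
end

section
/- Let q ∈ ℕ and let f : {−1,0,…,q+1} → ℝ satisfy f(−1) = 0 and f(q+1) = 0. Define ∇f, Δf ∈ C[0,q]_Z by ∇f(ν) = f(ν) − f(ν−1) and Δf(ν) = f(ν+1) − f(ν) for ν ∈ [0,q]_Z. Then N(∇f) ≥ N(f), S^−(∇f) ≥ S^−(f), N(Δf) ≥ N(f), and S^−(Δf) ≥ S^−(f), where on the left-hand sides the quantities are computed for ∇f and Δf as elements of C[0,q]_Z and on the right-hand sides for the restriction of f to [0,q]_Z. -/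
namespace DiscPaper

attribute [local instance] Classical.propDecidable

/-! ### sign helpers -/

lemma postrans {a b c : ℝ} (h1 : 0 < a * b) (h2 : 0 < b * c) : 0 < a * c := by
  nlinarith [mul_pos h1 h2, sq_nonneg b]

lemma negtrans {a b c : ℝ} (h1 : a * b < 0) (h2 : 0 < b * c) : a * c < 0 := by
  nlinarith [mul_pos h2 h2, sq_nonneg b, mul_neg_of_neg_of_pos h1 h2]

lemma const_sign {h : ℕ → ℝ} {L R : ℕ} (hLR : L ≤ R)
    (hnz : ∀ c, L ≤ c → c ≤ R → h c ≠ 0)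
    (hnc : ∀ c, L < c → c ≤ R → ¬ h (c - 1) * h c < 0) : 0 < h L * h R := by
  induction R with
  | zero =>
    have : L = 0 := by omega
    subst this
    have := hnz 0 le_rfl le_rfl
    exact mul_self_pos.2 this
  | succ n ih =>
    rcases Nat.lt_or_ge L (n + 1) with hL | hL
    · have ih' := ih (by omega) (fun c h1 h2 => hnz c h1 (by omega))
        (fun c h1 h2 => hnc c h1 (by omega))
      have hstep : 0 < h n * h (n + 1) := by
        have h1 := hnc (n + 1) (by omega) le_rfl
        have h2 := hnz n (by omega) (by omega)
        have h3 := hnz (n + 1) (by omega) le_rfl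
        have : h ((n + 1) - 1) = h n := by norm_num
        rw [this] at h1
        rcases lt_or_gt_of_ne (mul_ne_zero h2 h3) with h | h
        · exact absurd h h1
        · exact h
      exact postrans ih' hstep
    · have : L = n + 1 := by omega
      subst this
      exact mul_self_pos.2 (hnz (n + 1) le_rfl le_rfl)

lemma exists_change {h : ℕ → ℝ} {i j : ℕ} (hij : i < j)
    (hnz : ∀ c, i ≤ c → c ≤ j → h c ≠ 0) (hprod : h i * h j < 0) :
    ∃ c, i < c ∧ c ≤ j ∧ h (c - 1) * h c < 0 := by
  by_contra hc
  push_neg at hc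
  have := const_sign hij.le hnz (fun c h1 h2 => not_lt.2 (hc c h1 h2))
  linarith

lemma exists_neg_term {s : Finset ℕ} {f : ℕ → ℝ} (h : ∑ j ∈ s, f j < 0) :
    ∃ j ∈ s, f j < 0 := by
  by_contra hc
  push_neg at hc
  exact absurd (Finset.sum_nonneg fun j hj => hc j hj) (not_le.2 h)

/-! ### finiteness -/

lemma zeroSet_finite (q : ℕ) (f : ℕ → ℝ) : {ν | IsZero q f ν}.Finite :=
  (Set.finite_Iic q).subset (by rintro ν (⟨h, _⟩ | ⟨_, h, _⟩) <;> exact h)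

lemma t1_finite (q : ℕ) (f : ℕ → ℝ) : {ν | ν ≤ q ∧ f ν = 0}.Finite :=
  (Set.finite_Iic q).subset (fun ν h => h.1)

lemma scSet_finite (q : ℕ) (g : ℕ → ℝ) :
    {ν | 1 ≤ ν ∧ ν ≤ q ∧ g (ν - 1) * g ν < 0}.Finite :=
  (Set.finite_Iic q).subset (fun ν h => h.2.1)

/-! ### congruence -/

lemma N_congr {q : ℕ} {f g : ℕ → ℝ} (h : ∀ ν ≤ q, f ν = g ν) : N q f = N q g := by
  unfold N
  congr 1
  ext ν
  simp only [Set.mem_setOf_eq, IsZero]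
  constructor <;> rintro (⟨h1, h2⟩ | ⟨h1, h2, h3⟩)
  · exact Or.inl ⟨h1, by rw [← h ν h1]; exact h2⟩
  · exact Or.inr ⟨h1, h2, by rw [← h (ν - 1) (by omega), ← h ν h2]; exact h3⟩
  · exact Or.inl ⟨h1, by rw [h ν h1]; exact h2⟩
  · exact Or.inr ⟨h1, h2, by rw [h (ν - 1) (by omega), h ν h2]; exact h3⟩

lemma signChanges_congr {q : ℕ} {f g : ℕ → ℝ} (h : ∀ ν ≤ q, f ν = g ν) :
    signChanges q f = signChanges q g := by
  unfold signChanges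
  congr 1
  ext ν
  simp only [Set.mem_setOf_eq]
  constructor <;> rintro ⟨h1, h2, h3⟩
  · exact ⟨h1, h2, by rw [← h (ν - 1) (by omega), ← h ν h2]; exact h3⟩
  · exact ⟨h1, h2, by rw [h (ν - 1) (by omega), h ν h2]; exact h3⟩

lemma Sminus_congr {q : ℕ} {f g : ℕ → ℝ} (h : ∀ ν ≤ q, f ν = g ν) :
    Sminus q f = Sminus q g := by
  unfold Sminus
  congr 1
  ext s
  simp only [Set.mem_setOf_eq]
  constructor <;> rintro ⟨g0, ⟨a1, a2⟩, rfl⟩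
  · exact ⟨g0, ⟨a1, fun ν hν hgν => by rw [← h ν hν]; exact a2 ν hν (by rw [h ν hν]; exact hgν)⟩, rfl⟩
  · exact ⟨g0, ⟨a1, fun ν hν hgν => by rw [h ν hν]; exact a2 ν hν (by rw [← h ν hν]; exact hgν)⟩, rfl⟩

/-! ### negation invariance -/

lemma N_neg (q : ℕ) (f : ℕ → ℝ) : N q (fun ν => -(f ν)) = N q f := by
  unfold N
  congr 1
  ext ν
  simp [IsZero, neg_mul_neg, neg_eq_zero]

lemma signChanges_neg (q : ℕ) (f : ℕ → ℝ) :
    signChanges q (fun ν => -(f ν)) = signChanges q f := by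
  unfold signChanges
  congr 1
  ext ν
  simp [neg_mul_neg]

lemma Sminus_neg (q : ℕ) (f : ℕ → ℝ) : Sminus q (fun ν => -(f ν)) = Sminus q f := by
  unfold Sminus
  congr 1
  ext s
  simp only [Set.mem_setOf_eq]
  constructor <;> rintro ⟨g0, ⟨a1, a2⟩, rfl⟩
  · refine ⟨fun ν => -(g0 ν), ⟨fun ν hν => neg_ne_zero.2 (a1 ν hν), fun ν hν hf => ?_⟩,
      signChanges_neg q g0⟩
    have := a2 ν hν (neg_ne_zero.2 hf)
    simp only [] at this ⊢
    rw [this]; ring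
  · refine ⟨fun ν => -(g0 ν), ⟨fun ν hν => neg_ne_zero.2 (a1 ν hν), fun ν hν hf => ?_⟩,
      signChanges_neg q g0⟩
    simp only [neg_ne_zero] at hf
    simp only []
    rw [a2 ν hν hf]

/-! ### reflection -/

lemma N0_reflect (q : ℕ) (f : ℕ → ℝ) : N0 q (fun ν => f (q - ν)) = N0 q f := by
  unfold N0
  have himg : {ν : ℕ | ν ≤ q ∧ (fun ν => f (q - ν)) ν = 0} =
      (fun μ => q - μ) '' {ν : ℕ | ν ≤ q ∧ f ν = 0} := by
    ext ν
    simp only [Set.mem_setOf_eq, Set.mem_image]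
    constructor
    · rintro ⟨h1, h2⟩
      exact ⟨q - ν, ⟨by omega, h2⟩, by omega⟩
    · rintro ⟨μ, ⟨hμ, h0⟩, rfl⟩
      refine ⟨by omega, ?_⟩
      have : q - (q - μ) = μ := by omega
      rw [this]; exact h0
  rw [himg, Set.ncard_image_of_injOn]
  intro a ha b hb hab
  simp only [Set.mem_setOf_eq] at ha hb
  simp only [] at hab
  omega

lemma signChanges_reflect (q : ℕ) (f : ℕ → ℝ) :
    signChanges q (fun ν => f (q - ν)) = signChanges q f := by
  unfold signChanges
  have himg : {ν : ℕ | 1 ≤ ν ∧ ν ≤ q ∧ (fun ν => f (q - ν)) (ν - 1) * (fun ν => f (q - ν)) ν < 0} =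
      (fun μ => q + 1 - μ) '' {ν : ℕ | 1 ≤ ν ∧ ν ≤ q ∧ f (ν - 1) * f ν < 0} := by
    ext ν
    simp only [Set.mem_setOf_eq, Set.mem_image]
    constructor
    · rintro ⟨h1, h2, h3⟩
      refine ⟨q + 1 - ν, ⟨by omega, by omega, ?_⟩, by omega⟩
      have e1 : q + 1 - ν - 1 = q - ν := by omega
      have e2 : q - (ν - 1) = q + 1 - ν := by omega
      rw [e1]
      rw [e2] at h3
      linarith [h3, mul_comm (f (q + 1 - ν)) (f (q - ν))]
    · rintro ⟨μ, ⟨h1, h2, h3⟩, rfl⟩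
      refine ⟨by omega, by omega, ?_⟩
      have e1 : q - (q + 1 - μ - 1) = μ := by omega
      have e2 : q - (q + 1 - μ) = μ - 1 := by omega
      rw [e1, e2]
      linarith [mul_comm (f μ) (f (μ - 1))]
  rw [himg, Set.ncard_image_of_injOn]
  intro a ha b hb hab
  simp only [Set.mem_setOf_eq] at ha hb
  simp only [] at hab
  omega

lemma N_split (q : ℕ) (f : ℕ → ℝ) : N q f = N0 q f + signChanges q f := by
  unfold N N0 signChanges
  have hset : {ν : ℕ | IsZero q f ν} =
      {ν : ℕ | ν ≤ q ∧ f ν = 0} ∪ {ν : ℕ | 1 ≤ ν ∧ ν ≤ q ∧ f (ν - 1) * f ν < 0} := by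
    ext ν; simp [IsZero, Set.mem_union]
  rw [hset, Set.ncard_union_eq ?_ (t1_finite q f) (scSet_finite q f)]
  rw [Set.disjoint_left]
  rintro ν ⟨h1, h2⟩ ⟨h3, h4, h5⟩
  rw [h2] at h5
  simp at h5

lemma N_reflect (q : ℕ) (f : ℕ → ℝ) : N q (fun ν => f (q - ν)) = N q f := by
  rw [N_split, N_split, N0_reflect, signChanges_reflect]

lemma Sminus_reflect (q : ℕ) (f : ℕ → ℝ) : Sminus q (fun ν => f (q - ν)) = Sminus q f := by
  unfold Sminus
  congr 1
  ext s
  simp only [Set.mem_setOf_eq]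
  constructor
  · rintro ⟨g, ⟨a1, a2⟩, rfl⟩
    refine ⟨fun ν => g (q - ν), ⟨fun ν hν => a1 _ (by omega), fun ν hν hf => ?_⟩,
      signChanges_reflect q g⟩
    have h1 : (fun μ => f (q - μ)) (q - ν) ≠ 0 := by
      simp only []
      have : q - (q - ν) = ν := by omega
      rw [this]; exact hf
    have := a2 (q - ν) (by omega) h1
    simp only [] at this
    have e : q - (q - ν) = ν := by omega
    rw [e] at this
    exact this
  · rintro ⟨g, ⟨a1, a2⟩, rfl⟩
    refine ⟨fun ν => g (q - ν), ⟨fun ν hν => a1 _ (by omega), fun ν hν hf => ?_⟩,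
      signChanges_reflect q g⟩
    simp only [] at hf ⊢
    exact a2 (q - ν) (by omega) hf

/-! ### main nabla lemma for N -/

lemma main_N (q : ℕ) (F D : ℕ → ℝ) (h0 : D 0 = F 0)
    (hD : ∀ ν, 1 ≤ ν → ν ≤ q → D ν = F ν - F (ν - 1)) :
    N q F ≤ N q D := by
  have tel : ∀ x, x ≤ q → ∑ j ∈ Finset.range (x + 1), D j = F x := by
    intro x
    induction x with
    | zero => intro _; simpa using h0
    | succ n ih =>
      intro hx
      rw [Finset.sum_range_succ, ih (by omega), hD (n + 1) (by omega) hx]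
      simp
  have tel2 : ∀ a x, a ≤ x → x ≤ q → ∑ j ∈ Finset.Ico (a + 1) (x + 1), D j = F x - F a := by
    intro a x hax
    induction x with
    | zero =>
      intro _
      have : a = 0 := by omega
      subst this
      simp
    | succ n ih =>
      intro hx
      rcases Nat.lt_or_ge a (n + 1) with h | h
      · have e : n + 1 - 1 = n := by omega
        rw [Finset.sum_Ico_succ_top (by omega), ih (by omega) (by omega),
          hD (n + 1) (by omega) hx, e]
        ring
      · have : a = n + 1 := by omega
        subst this
        simp
  have K1 : ∀ b, IsZero q F b → ∃ c, c ≤ b ∧ IsZero q D c := by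
    intro b hb
    by_contra hcon
    push_neg at hcon
    have hbq : b ≤ q := by rcases hb with ⟨h, _⟩ | ⟨_, h, _⟩ <;> exact h
    have hnz : ∀ c, c ≤ b → D c ≠ 0 := fun c hc h =>
      hcon c hc (Or.inl ⟨hc.trans hbq, h⟩)
    have hnc : ∀ c, 0 < c → c ≤ b → ¬ D (c - 1) * D c < 0 := fun c h1 h2 hlt =>
      hcon c h2 (Or.inr ⟨h1, h2.trans hbq, hlt⟩)
    have hFpos : ∀ x, x ≤ b → 0 < F x * D 0 := by
      intro x hx
      have htel := tel x (hx.trans hbq)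
      have heq : F x * D 0 = ∑ j ∈ Finset.range (x + 1), D j * D 0 := by
        rw [← Finset.sum_mul, htel]
      rw [heq]
      apply Finset.sum_pos
      · intro j hj
        have hj' : j ≤ x := by simpa [Nat.lt_succ_iff] using hj
        have := const_sign (Nat.zero_le j) (fun c _ h2 => hnz c (by omega))
          (fun c h1 h2 => hnc c h1 (by omega))
        linarith [mul_comm (D 0) (D j)]
      · exact ⟨0, by simp⟩
    rcases hb with ⟨hq, h0'⟩ | ⟨h1', hq', hlt⟩
    · have := hFpos b le_rfl
      rw [h0'] at this
      simp at this
    · have hA := hFpos b le_rfl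
      have hB := hFpos (b - 1) (by omega)
      nlinarith [mul_pos hB hA, sq_nonneg (D 0)]
  have K2 : ∀ a b, a < b → IsZero q F a → IsZero q F b →
      ∃ c, a < c ∧ c ≤ b ∧ IsZero q D c := by
    intro a b hab ha hb
    by_contra hcon
    push_neg at hcon
    have hbq : b ≤ q := by rcases hb with ⟨h, _⟩ | ⟨_, h, _⟩ <;> exact h
    have haq : a ≤ q := by omega
    have hnz : ∀ c, a < c → c ≤ b → D c ≠ 0 := fun c h1 h2 h =>
      hcon c h1 h2 (Or.inl ⟨h2.trans hbq, h⟩)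
    have hnc : ∀ c, a + 1 < c → c ≤ b → ¬ D (c - 1) * D c < 0 := fun c h1 h2 hlt =>
      hcon c (by omega) h2 (Or.inr ⟨by omega, h2.trans hbq, hlt⟩)
    have hcs : ∀ x, a + 1 ≤ x → x ≤ b → 0 < D (a + 1) * D x := by
      intro x h1 h2
      exact const_sign h1 (fun c hc1 hc2 => hnz c (by omega) (by omega))
        (fun c hc1 hc2 => hnc c (by omega) (by omega))
    have key : ∀ x, a + 1 ≤ x → x ≤ b → 0 < (F x - F a) * D (a + 1) := by
      intro x h1 h2
      have htel := tel2 a x (by omega) (h2.trans hbq)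
      have heq : (F x - F a) * D (a + 1) = ∑ j ∈ Finset.Ico (a + 1) (x + 1), D j * D (a + 1) := by
        rw [← Finset.sum_mul, htel]
      rw [heq]
      apply Finset.sum_pos
      · intro j hj
        rw [Finset.mem_Ico] at hj
        have := hcs j hj.1 (by omega)
        linarith [mul_comm (D (a + 1)) (D j)]
      · exact ⟨a + 1, by rw [Finset.mem_Ico]; omega⟩
    rcases ha with ⟨_, ha0⟩ | ⟨ha1, haq', halt⟩
    · -- a of first type : F a = 0
      have key' : ∀ x, a + 1 ≤ x → x ≤ b → 0 < F x * D (a + 1) := by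
        intro x h1 h2
        have := key x h1 h2
        rw [ha0, sub_zero] at this
        exact this
      rcases hb with ⟨_, hb0⟩ | ⟨hb1, hbq', hblt⟩
      · have := key' b (by omega) le_rfl
        rw [hb0] at this
        simp at this
      · rcases Nat.eq_or_lt_of_le (show a ≤ b - 1 by omega) with hba | hba
        · rw [← hba, ha0] at hblt
          simp at hblt
        · have h1 := key' (b - 1) (by omega) (by omega)
          have h2 := key' b (by omega) le_rfl
          nlinarith [mul_pos h1 h2, sq_nonneg (D (a + 1))]
    · -- a of second type
      have hDa : D a = F a - F (a - 1) := hD a ha1 haq'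
      have hDaFa : 0 < F a * D a := by
        rw [hDa]
        nlinarith [halt, sq_nonneg (F a)]
      have hDa1ne : D (a + 1) ≠ 0 := hnz (a + 1) (by omega) (by omega)
      have hDane : D a ≠ 0 := by
        intro h
        rw [h] at hDaFa
        simp at hDaFa
      have hnc1 : ¬ D a * D (a + 1) < 0 := by
        intro hlt
        refine hcon (a + 1) (by omega) (by omega) (Or.inr ⟨by omega, by omega, ?_⟩)
        simpa using hlt
      have hpos : 0 < D a * D (a + 1) := by
        rcases lt_or_gt_of_ne (mul_ne_zero hDane hDa1ne) with h | h
        · exact absurd h hnc1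
        · exact h
      have hFaD : 0 < F a * D (a + 1) := postrans hDaFa hpos
      have key2 : ∀ x, a ≤ x → x ≤ b → 0 < F x * D (a + 1) := by
        intro x h1 h2
        rcases Nat.eq_or_lt_of_le h1 with h | h
        · rw [← h]; exact hFaD
        · have := key x (by omega) h2
          nlinarith
      rcases hb with ⟨_, hb0⟩ | ⟨hb1, hbq', hblt⟩
      · have := key2 b hab.le le_rfl
        rw [hb0] at this
        simp at this
      · have h1 := key2 (b - 1) (by omega) (by omega)
        have h2 := key2 b hab.le le_rfl
        nlinarith [mul_pos h1 h2, sq_nonneg (D (a + 1))]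
  -- injection
  classical
  set ψ := fun b => Nat.findGreatest (fun c => IsZero q D c) b with hψ
  have hmem : ∀ b ∈ {ν | IsZero q F ν}, ψ b ∈ {ν | IsZero q D ν} := by
    intro b hb
    obtain ⟨c, hcb, hc⟩ := K1 b hb
    exact Nat.findGreatest_spec hcb hc
  have hmono : ∀ b b', IsZero q F b → IsZero q F b' → b < b' → ψ b < ψ b' := by
    intro b b' hb hb' hlt
    obtain ⟨c, hc1, hc2, hc3⟩ := K2 b b' hlt hb hb'
    have h1 : ψ b ≤ b := Nat.findGreatest_le b
    have h2 : c ≤ ψ b' := Nat.le_findGreatest hc2 hc3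
    omega
  have hinj : Set.InjOn ψ {ν | IsZero q F ν} := by
    intro x hx y hy hxy
    simp only [Set.mem_setOf_eq] at hx hy
    rcases lt_trichotomy x y with h | h | h
    · exact absurd hxy (by have := hmono x y hx hy h; omega)
    · exact h
    · exact absurd hxy (by have := hmono y x hy hx h; omega)
  exact Set.ncard_le_ncard_of_injOn ψ hmem hinj (zeroSet_finite q D)

/-! ### canonical admissible replacement -/

open scoped Classical in
noncomputable def rep (q : ℕ) (F : ℕ → ℝ) (ν : ℕ) : ℝ :=
  if F ν ≠ 0 then F ν
  else if hp : ∃ μ, μ < ν ∧ F μ ≠ 0 then F (Nat.findGreatest (fun μ => F μ ≠ 0) (ν - 1))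
  else if h2 : ∃ μ, μ ≤ q ∧ F μ ≠ 0 then F (Nat.find h2)
  else 1

lemma rep_ne_zero (q : ℕ) (F : ℕ → ℝ) (ν : ℕ) : rep q F ν ≠ 0 := by
  unfold rep
  split_ifs with h1 h2 h3
  · exact h1
  · obtain ⟨μ, hμ, hF⟩ := h2
    exact Nat.findGreatest_spec (P := fun μ => F μ ≠ 0) (show μ ≤ ν - 1 by omega) hF
  · exact (Nat.find_spec h3).2
  · norm_num

lemma rep_eq (q : ℕ) (F : ℕ → ℝ) (ν : ℕ) (h : F ν ≠ 0) : rep q F ν = F ν := by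
  unfold rep
  rw [if_pos h]

lemma rep_change (q : ℕ) (F : ℕ → ℝ) {ν : ℕ} (hν1 : 1 ≤ ν) (hνq : ν ≤ q)
    (hch : rep q F (ν - 1) * rep q F ν < 0) :
    F ν ≠ 0 ∧ rep q F ν = F ν ∧
      ∃ a, a < ν ∧ F a ≠ 0 ∧ rep q F (ν - 1) = F a ∧ (a < ν - 1 → F (ν - 1) = 0) := by
  have hprev_eq : ∀ _ : (∃ μ, μ < ν ∧ F μ ≠ 0),
      rep q F (ν - 1) = F (Nat.findGreatest (fun μ => F μ ≠ 0) (ν - 1)) := by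
    intro hp
    by_cases hν1' : F (ν - 1) ≠ 0
    · rw [rep_eq q F _ hν1']
      have : Nat.findGreatest (fun μ => F μ ≠ 0) (ν - 1) = ν - 1 :=
        le_antisymm (Nat.findGreatest_le _) (Nat.le_findGreatest le_rfl hν1')
      rw [this]
    · push_neg at hν1'
      obtain ⟨μ, hμν, hμF⟩ := hp
      have hμ' : μ < ν - 1 := by
        have : μ ≠ ν - 1 := fun h => hμF (h ▸ hν1')
        omega
      have hp' : ∃ μ, μ < ν - 1 ∧ F μ ≠ 0 := ⟨μ, hμ', hμF⟩
      unfold rep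
      rw [if_neg (by simpa using hν1'), dif_pos hp']
      congr 1
      have h2 : ν - 1 = (ν - 2) + 1 := by omega
      have h3 : ν - 1 - 1 = ν - 2 := by omega
      rw [h3, h2, Nat.findGreatest_succ, if_neg (by rw [← h2]; simpa using hν1')]
  have hFν : F ν ≠ 0 := by
    intro hF0
    have heq : rep q F (ν - 1) = rep q F ν := by
      by_cases hp : ∃ μ, μ < ν ∧ F μ ≠ 0
      · rw [hprev_eq hp]
        unfold rep
        rw [if_neg (by simpa using hF0), dif_pos hp]
      · have hν1'' : F (ν - 1) = 0 := by
          by_contra h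
          exact hp ⟨ν - 1, by omega, h⟩
        have hp' : ¬ ∃ μ, μ < ν - 1 ∧ F μ ≠ 0 := by
          rintro ⟨μ, h1, h2⟩
          exact hp ⟨μ, by omega, h2⟩
        unfold rep
        rw [if_neg (by simpa using hν1''), if_neg (by simpa using hF0),
          dif_neg hp', dif_neg hp]
    rw [heq] at hch
    nlinarith [mul_self_nonneg (rep q F ν)]
  refine ⟨hFν, rep_eq q F ν hFν, ?_⟩
  by_cases hp : ∃ μ, μ < ν ∧ F μ ≠ 0
  · obtain ⟨μ, hμν, hμF⟩ := hp
    have haP : F (Nat.findGreatest (fun μ => F μ ≠ 0) (ν - 1)) ≠ 0 :=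
      Nat.findGreatest_spec (P := fun μ => F μ ≠ 0) (show μ ≤ ν - 1 by omega) hμF
    have haν : Nat.findGreatest (fun μ => F μ ≠ 0) (ν - 1) ≤ ν - 1 := Nat.findGreatest_le _
    refine ⟨Nat.findGreatest (fun μ => F μ ≠ 0) (ν - 1), by omega, haP, hprev_eq ⟨μ, hμν, hμF⟩, ?_⟩
    intro hlt
    by_contra hne
    have := Nat.le_findGreatest (P := fun μ => F μ ≠ 0) (le_refl (ν - 1)) hne
    omega
  · exfalso
    have hν1'' : F (ν - 1) = 0 := by
      by_contra h
      exact hp ⟨ν - 1, by omega, h⟩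
    have hp' : ¬ ∃ μ, μ < ν - 1 ∧ F μ ≠ 0 := by
      rintro ⟨μ, h1, h2⟩
      exact hp ⟨μ, by omega, h2⟩
    have h2ex : ∃ μ, μ ≤ q ∧ F μ ≠ 0 := ⟨ν, hνq, hFν⟩
    have hfind : Nat.find h2ex = ν := by
      rw [Nat.find_eq_iff]
      refine ⟨⟨hνq, hFν⟩, fun m hm hmem => ?_⟩
      exact hp ⟨m, hm, hmem.2⟩
    have hrepν1 : rep q F (ν - 1) = F ν := by
      unfold rep
      rw [if_neg (by simpa using hν1''), dif_neg hp', dif_pos h2ex, hfind]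
    rw [hrepν1, rep_eq q F ν hFν] at hch
    nlinarith [mul_self_nonneg (F ν)]

lemma negtrans2 {a b c : ℝ} (h1 : 0 < a * b) (h2 : b * c < 0) : a * c < 0 := by
  nlinarith [mul_pos h1 h1, sq_nonneg b, mul_neg_of_pos_of_neg h1 h2]

/-! ### main nabla lemma for Sminus -/

lemma main_S (q : ℕ) (F D : ℕ → ℝ) (h0 : D 0 = F 0)
    (hD : ∀ ν, 1 ≤ ν → ν ≤ q → D ν = F ν - F (ν - 1)) :
    Sminus q F ≤ Sminus q D := by
  have tel : ∀ x, x ≤ q → ∑ j ∈ Finset.range (x + 1), D j = F x := by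
    intro x
    induction x with
    | zero => intro _; simpa using h0
    | succ n ih =>
      intro hx
      rw [Finset.sum_range_succ, ih (by omega), hD (n + 1) (by omega) hx]
      simp
  have hne : {s | ∃ g, Admissible q D g ∧ signChanges q g = s}.Nonempty := by
    refine ⟨signChanges q (fun ν => if D ν = 0 then 1 else D ν),
      (fun ν => if D ν = 0 then 1 else D ν), ⟨?_, ?_⟩, rfl⟩
    · intro ν _
      simp only []
      by_cases hc : D ν = 0
      · rw [if_pos hc]; norm_num
      · rw [if_neg hc]; exact hc
    · intro ν _ hν
      simp only []
      rw [if_neg hν]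
  have target : ∀ s ∈ {s | ∃ g, Admissible q D g ∧ signChanges q g = s}, Sminus q F ≤ s := by
    rintro s ⟨h, ⟨hnz, hag⟩, rfl⟩
    have hrep_mem : signChanges q (rep q F) ∈
        {s | ∃ g, Admissible q F g ∧ signChanges q g = s} :=
      ⟨rep q F, ⟨fun ν _ => rep_ne_zero q F ν, fun ν _ hν => rep_eq q F ν hν⟩, rfl⟩
    have step1 : Sminus q F ≤ signChanges q (rep q F) := Nat.sInf_le hrep_mem
    refine step1.trans ?_
    have F1 : ∀ ν, 1 ≤ ν → ν ≤ q → rep q F (ν - 1) * rep q F ν < 0 → 0 < F ν * h ν := by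
      intro ν hν1 hνq hch
      obtain ⟨hF, hgν, a, haν, hFa, hga, hzero⟩ := rep_change q F hν1 hνq hch
      have hopp : F a * F ν < 0 := by rw [← hga, ← hgν]; exact hch
      have hDν : D ν = F ν - F (ν - 1) := hD ν hν1 hνq
      rcases Nat.eq_or_lt_of_le (show a ≤ ν - 1 by omega) with hcase | hcase
      · have hpos : 0 < F ν * D ν := by
          rw [hDν, ← hcase]
          nlinarith [hopp, sq_nonneg (F ν)]
        have hDne : D ν ≠ 0 := by
          intro hz
          rw [hz] at hpos
          simp at hpos
        rw [hag ν hνq hDne]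
        exact hpos
      · have hz : F (ν - 1) = 0 := hzero hcase
        have hDν' : D ν = F ν := by rw [hDν, hz, sub_zero]
        have hDne : D ν ≠ 0 := by rw [hDν']; exact hF
        rw [hag ν hνq hDne, hDν']
        exact mul_self_pos.2 hF
    have F2 : ∀ ν, 1 ≤ ν → ν ≤ q → rep q F (ν - 1) * rep q F ν < 0 →
        ∃ c, 1 ≤ c ∧ c ≤ q ∧ c ≤ ν ∧ h (c - 1) * h c < 0 := by
      intro ν hν1 hνq hch
      obtain ⟨hF, hgν, a, haν, hFa, hga, hzero⟩ := rep_change q F hν1 hνq hch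
      have hopp : F a * F ν < 0 := by rw [← hga, ← hgν]; exact hch
      have hsum : ∑ j ∈ Finset.range (a + 1), D j = F a := tel a (by omega)
      have hsum' : ∑ j ∈ Finset.range (a + 1), D j * F ν < 0 := by
        rw [← Finset.sum_mul, hsum]; exact hopp
      obtain ⟨j, hjmem, hjneg⟩ := exists_neg_term hsum'
      have hja : j ≤ a := by rw [Finset.mem_range] at hjmem; omega
      have hDj : D j ≠ 0 := by
        intro hz
        rw [hz] at hjneg
        simp at hjneg
      have hhj : h j = D j := hag j (by omega) hDj
      have hF1 := F1 ν hν1 hνq hch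
      have hprod : h j * h ν < 0 := by
        rw [hhj]
        exact negtrans hjneg hF1
      obtain ⟨c, hc1, hc2, hc3⟩ := exists_change (show j < ν by omega)
        (fun c hc1 hc2 => hnz c (by omega)) hprod
      exact ⟨c, by omega, by omega, hc2, hc3⟩
    have hmono : ∀ ν ν', (1 ≤ ν ∧ ν ≤ q ∧ rep q F (ν - 1) * rep q F ν < 0) →
        (1 ≤ ν' ∧ ν' ≤ q ∧ rep q F (ν' - 1) * rep q F ν' < 0) → ν < ν' →
        Nat.findGreatest (fun c => 1 ≤ c ∧ c ≤ q ∧ h (c - 1) * h c < 0) ν <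
          Nat.findGreatest (fun c => 1 ≤ c ∧ c ≤ q ∧ h (c - 1) * h c < 0) ν' := by
      rintro ν ν' ⟨hν1, hνq, hch⟩ ⟨hν'1, hν'q, hch'⟩ hlt
      have h1 : 1 ≤ Nat.findGreatest
            (fun c => 1 ≤ c ∧ c ≤ q ∧ rep q F (c - 1) * rep q F c < 0) (ν' - 1) ∧
          Nat.findGreatest
            (fun c => 1 ≤ c ∧ c ≤ q ∧ rep q F (c - 1) * rep q F c < 0) (ν' - 1) ≤ q ∧
          rep q F (Nat.findGreatest
            (fun c => 1 ≤ c ∧ c ≤ q ∧ rep q F (c - 1) * rep q F c < 0) (ν' - 1) - 1) *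
          rep q F (Nat.findGreatest
            (fun c => 1 ≤ c ∧ c ≤ q ∧ rep q F (c - 1) * rep q F c < 0) (ν' - 1)) < 0 :=
        Nat.findGreatest_spec (P := fun c => 1 ≤ c ∧ c ≤ q ∧ rep q F (c - 1) * rep q F c < 0)
          (show ν ≤ ν' - 1 by omega) ⟨hν1, hνq, hch⟩
      obtain ⟨hE1, hEq, hEch⟩ := h1
      have h2 : ν ≤ Nat.findGreatest
          (fun c => 1 ≤ c ∧ c ≤ q ∧ rep q F (c - 1) * rep q F c < 0) (ν' - 1) :=
        Nat.le_findGreatest (P := fun c => 1 ≤ c ∧ c ≤ q ∧ rep q F (c - 1) * rep q F c < 0)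
          (by omega) ⟨hν1, hνq, hch⟩
      have h3 : Nat.findGreatest
          (fun c => 1 ≤ c ∧ c ≤ q ∧ rep q F (c - 1) * rep q F c < 0) (ν' - 1) ≤ ν' - 1 :=
        Nat.findGreatest_le _
      set E := Nat.findGreatest
        (fun c => 1 ≤ c ∧ c ≤ q ∧ rep q F (c - 1) * rep q F c < 0) (ν' - 1) with hEdef
      have hnochange : ∀ c, E < c → c ≤ ν' - 1 → ¬ rep q F (c - 1) * rep q F c < 0 :=
        fun c hc1 hc2 hcon => Nat.findGreatest_is_greatest hc1 hc2 ⟨by omega, by omega, hcon⟩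
      have hconst : 0 < rep q F E * rep q F (ν' - 1) :=
        const_sign h3 (fun c _ _ => rep_ne_zero q F c) hnochange
      have hFE : 0 < F E * h E := F1 E hE1 hEq hEch
      have hFν' : 0 < F ν' * h ν' := F1 ν' hν'1 hν'q hch'
      have hrepE : rep q F E = F E := (rep_change q F hE1 hEq hEch).2.1
      have hrepν' : rep q F ν' = F ν' := (rep_change q F hν'1 hν'q hch').2.1
      rw [hrepE] at hconst
      have hch2 : rep q F (ν' - 1) * F ν' < 0 := by rw [← hrepν']; exact hch'
      have hEa : 0 < h E * F E := by rw [mul_comm]; exact hFE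
      have t1 : 0 < h E * rep q F (ν' - 1) := postrans hEa hconst
      have t2 : h E * F ν' < 0 := negtrans2 t1 hch2
      have t3 : h E * h ν' < 0 := negtrans t2 hFν'
      obtain ⟨c, hc1, hc2, hc3⟩ := exists_change (show E < ν' by omega)
        (fun c hcc1 hcc2 => hnz c (by omega)) t3
      have hc4 : c ≤ Nat.findGreatest (fun c => 1 ≤ c ∧ c ≤ q ∧ h (c - 1) * h c < 0) ν' :=
        Nat.le_findGreatest (P := fun c => 1 ≤ c ∧ c ≤ q ∧ h (c - 1) * h c < 0)
          hc2 ⟨by omega, by omega, hc3⟩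
      have hc5 : Nat.findGreatest (fun c => 1 ≤ c ∧ c ≤ q ∧ h (c - 1) * h c < 0) ν ≤ ν :=
        Nat.findGreatest_le _
      omega
    have hmaps : ∀ ν ∈ {ν | 1 ≤ ν ∧ ν ≤ q ∧ rep q F (ν - 1) * rep q F ν < 0},
        Nat.findGreatest (fun c => 1 ≤ c ∧ c ≤ q ∧ h (c - 1) * h c < 0) ν ∈
          {ν | 1 ≤ ν ∧ ν ≤ q ∧ h (ν - 1) * h ν < 0} := by
      intro ν hν
      simp only [Set.mem_setOf_eq] at hν ⊢
      obtain ⟨c, hc1, hc2, hc3, hc4⟩ := F2 ν hν.1 hν.2.1 hν.2.2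
      exact Nat.findGreatest_spec (P := fun c => 1 ≤ c ∧ c ≤ q ∧ h (c - 1) * h c < 0)
        hc3 ⟨hc1, hc2, hc4⟩
    have hinj : Set.InjOn (fun ν => Nat.findGreatest
        (fun c => 1 ≤ c ∧ c ≤ q ∧ h (c - 1) * h c < 0) ν)
        {ν | 1 ≤ ν ∧ ν ≤ q ∧ rep q F (ν - 1) * rep q F ν < 0} := by
      intro x hx y hy hxy
      simp only [Set.mem_setOf_eq] at hx hy
      simp only [] at hxy
      rcases lt_trichotomy x y with hc | hc | hc
      · exact absurd hxy (by have := hmono x y hx hy hc; omega)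
      · exact hc
      · exact absurd hxy (by have := hmono y x hy hx hc; omega)
    exact Set.ncard_le_ncard_of_injOn _ hmaps hinj (scSet_finite q h)
  calc Sminus q F ≤ sInf {s | ∃ g, Admissible q D g ∧ signChanges q g = s} :=
        le_csInf hne target
    _ = Sminus q D := rfl

/-! ### assembly -/

lemma half (q : ℕ) (g : ℤ → ℝ) (hm1 : g (-1) = 0) :
    N q (fun ν : ℕ => g ν) ≤ N q (fun ν : ℕ => g ν - g ((ν : ℤ) - 1)) ∧
    Sminus q (fun ν : ℕ => g ν) ≤ Sminus q (fun ν : ℕ => g ν - g ((ν : ℤ) - 1)) := by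
  classical
  have h01 : (fun ν : ℕ => if ν = 0 then g ((0 : ℕ) : ℤ) else g ν - g ((↑(ν - 1) : ℤ))) 0
      = (fun ν : ℕ => g ν) 0 := by norm_num
  have hD1 : ∀ ν, 1 ≤ ν → ν ≤ q →
      (fun ν : ℕ => if ν = 0 then g ((0 : ℕ) : ℤ) else g ν - g ((↑(ν - 1) : ℤ))) ν
        = (fun ν : ℕ => g ν) ν - (fun ν : ℕ => g ν) (ν - 1) := by
    intro ν h1 h2
    simp only [if_neg (show ¬ ν = 0 by omega)]
  have hc : ∀ ν ≤ q, (fun ν : ℕ => g ν - g ((ν : ℤ) - 1)) ν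
      = (fun ν : ℕ => if ν = 0 then g ((0 : ℕ) : ℤ) else g ν - g ((↑(ν - 1) : ℤ))) ν := by
    intro ν hν
    simp only []
    by_cases h : ν = 0
    · subst h
      rw [if_pos rfl]
      rw [show (((0 : ℕ) : ℤ) - 1) = (-1 : ℤ) by norm_num, hm1]
      ring
    · rw [if_neg h]
      have e : ((ν : ℤ) - 1) = ((ν - 1 : ℕ) : ℤ) := by omega
      rw [e]
  constructor
  · rw [N_congr hc]
    exact main_N q _ _ h01 hD1
  · rw [Sminus_congr hc]
    exact main_S q _ _ h01 hD1


/-- for `f : {-1,…,q+1} → ℝ` with `f(-1) = f(q+1) = 0`, the differences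
`∇f(ν) = f(ν) - f(ν-1)` and `Δf(ν) = f(ν+1) - f(ν)`, viewed as elements of
`C[0,q]_ℤ`, satisfy `N(∇f) ≥ N(f)`, `S⁻(∇f) ≥ S⁻(f)`, `N(Δf) ≥ N(f)`, and
`S⁻(Δf) ≥ S⁻(f)`, where `f` on the right is restricted to `[0,q]_ℤ`. -/

theorem stmt_14 (q : ℕ) (f : ℤ → ℝ) (hm1 : f (-1) = 0) (hq1 : f ((q : ℤ) + 1) = 0) :
    N q (fun ν : ℕ => f ν - f ((ν : ℤ) - 1)) ≥ N q (fun ν : ℕ => f ν) ∧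
    Sminus q (fun ν : ℕ => f ν - f ((ν : ℤ) - 1)) ≥ Sminus q (fun ν : ℕ => f ν) ∧
    N q (fun ν : ℕ => f ((ν : ℤ) + 1) - f ν) ≥ N q (fun ν : ℕ => f ν) ∧
    Sminus q (fun ν : ℕ => f ((ν : ℤ) + 1) - f ν) ≥ Sminus q (fun ν : ℕ => f ν) := by
  classical
  obtain ⟨hN1, hS1⟩ := half q f hm1
  have hm1R : (fun x : ℤ => f ((q : ℤ) - x)) (-1) = 0 := by
    simp only []
    rw [show ((q : ℤ) - (-1)) = (q : ℤ) + 1 by ring]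
    exact hq1
  obtain ⟨hN2, hS2⟩ := half q (fun x : ℤ => f ((q : ℤ) - x)) hm1R
  have cA : ∀ ν ≤ q, (fun ν : ℕ => (fun x : ℤ => f ((q : ℤ) - x)) ν) ν
      = (fun ν : ℕ => f ((q - ν : ℕ) : ℤ)) ν := by
    intro ν hν
    simp only []
    congr 1
    omega
  have cB : ∀ ν ≤ q, (fun ν : ℕ => (fun x : ℤ => f ((q : ℤ) - x)) ν
        - (fun x : ℤ => f ((q : ℤ) - x)) ((ν : ℤ) - 1)) ν
      = (fun ν : ℕ => -((fun μ : ℕ => f ((μ : ℤ) + 1) - f μ) (q - ν))) ν := by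
    intro ν hν
    simp only []
    have e1 : (q : ℤ) - ν = ((q - ν : ℕ) : ℤ) := by omega
    have e2 : (q : ℤ) - ((ν : ℤ) - 1) = ((q - ν : ℕ) : ℤ) + 1 := by omega
    rw [e1, e2]
    ring
  have eqA : N q (fun ν : ℕ => (fun x : ℤ => f ((q : ℤ) - x)) ν) = N q (fun ν : ℕ => f ν) := by
    rw [N_congr cA]
    exact N_reflect q (fun ν : ℕ => f ν)
  have eqB : N q (fun ν : ℕ => (fun x : ℤ => f ((q : ℤ) - x)) ν
        - (fun x : ℤ => f ((q : ℤ) - x)) ((ν : ℤ) - 1))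
      = N q (fun ν : ℕ => f ((ν : ℤ) + 1) - f ν) := by
    rw [N_congr cB, N_neg q (fun ν : ℕ => (fun μ : ℕ => f ((μ : ℤ) + 1) - f μ) (q - ν))]
    exact N_reflect q (fun μ : ℕ => f ((μ : ℤ) + 1) - f μ)
  have eqA' : Sminus q (fun ν : ℕ => (fun x : ℤ => f ((q : ℤ) - x)) ν)
      = Sminus q (fun ν : ℕ => f ν) := by
    rw [Sminus_congr cA]
    exact Sminus_reflect q (fun ν : ℕ => f ν)
  have eqB' : Sminus q (fun ν : ℕ => (fun x : ℤ => f ((q : ℤ) - x)) ν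
        - (fun x : ℤ => f ((q : ℤ) - x)) ((ν : ℤ) - 1))
      = Sminus q (fun ν : ℕ => f ((ν : ℤ) + 1) - f ν) := by
    rw [Sminus_congr cB, Sminus_neg q (fun ν : ℕ => (fun μ : ℕ => f ((μ : ℤ) + 1) - f μ) (q - ν))]
    exact Sminus_reflect q (fun μ : ℕ => f ((μ : ℤ) + 1) - f μ)
  refine ⟨hN1, hS1, ?_, ?_⟩
  · rw [ge_iff_le, ← eqA, ← eqB]
    exact hN2
  · rw [ge_iff_le, ← eqA', ← eqB']
    exact hS2

end DiscPaper
end
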